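/- arXiv:math/0503465 — 7 statements merged into one kernel-verified Lean document; each statement's English description precedes it below -/
import Mathlib

section
/- A permutation π of [m] has no increasing subsequence of length greater than d if and only if the insertion tableau P(π) produced by the RSK algorithm has at most d columns. -/
/-- Row-insert `x` into a single row: either append at the end, or bump the
smallest entry greater than `x`. Returns the new row and the bumped value. -/
def insertInRow (row : List ℕ) (x : ℕ) : List ℕ × Option ℕ :=
  match row.findIdx? (fun y => decide (x < y)) with
  | none => (row ++ [x], none)
  | some i => (row.set i x, row[i]?)

/-- RSK row-insertion (bumping) of `x` into a tableau given as its list of rows. -/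
def rowInsertT : List (List ℕ) → ℕ → List (List ℕ)
  | [], x => [[x]]
  | r :: rs, x =>
    match insertInRow r x with
    | (r', none) => r' :: rs
    | (r', some y) => r' :: rowInsertT rs y

/-- The shape of a tableau: the list of its row lengths. -/
def shapeT (T : List (List ℕ)) : List ℕ := T.map List.length

/-- The number of columns of a tableau: the length of its first row. -/
def numCols (T : List (List ℕ)) : ℕ := (T.getD 0 []).length

/-- The insertion tableau `P` of a word, built by successive row-insertions. -/
def rskP (l : List ℕ) : List (List ℕ) := l.foldl rowInsertT []

/-- The index of the row in which row-inserting `x` into `T` creates a new box. -/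
def newBoxRow (T : List (List ℕ)) (x : ℕ) : ℕ :=
  (List.range (rowInsertT T x).length).findIdx
    (fun i => decide ((T.getD i []).length < ((rowInsertT T x).getD i []).length))

/-- The (row, column) position (0-indexed) of the new box created by
row-inserting `x` into `T`. -/
def newBox (T : List (List ℕ)) (x : ℕ) : ℕ × ℕ :=
  (newBoxRow T x, ((rowInsertT T x).getD (newBoxRow T x) []).length - 1)

/-- One step of the full RSK algorithm on the pair `(P, Q)`: insert the value
`xi.1` into `P` and record the label `xi.2` in `Q` at the newly created box. -/
def rskStep (PQ : List (List ℕ) × List (List ℕ)) (xi : ℕ × ℕ) :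
    List (List ℕ) × List (List ℕ) :=
  let r := newBoxRow PQ.1 xi.1
  (rowInsertT PQ.1 xi.1,
    if r < PQ.2.length then PQ.2.set r (PQ.2.getD r [] ++ [xi.2]) else PQ.2 ++ [[xi.2]])

/-- The RSK pair `(P, Q)` of a word (the `i`-th letter gets recording label `i`). -/
def rskPQ (l : List ℕ) : List (List ℕ) × List (List ℕ) :=
  (l.zip (List.range' 1 l.length)).foldl rskStep ([], [])

/-- `T` is a standard Young tableau with entries `{1, …, m}`, given as its list of
rows: no empty rows, weakly decreasing row lengths, rows strictly increasing left
to right, columns strictly increasing top to bottom, and the entries are exactly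
`1, …, m`. -/
def isSYT (m : ℕ) (T : List (List ℕ)) : Prop :=
  [] ∉ T ∧
  List.Chain' (fun a b => b.length ≤ a.length) T ∧
  (∀ r ∈ T, List.Chain' (· < ·) r) ∧
  (∀ i j : ℕ, j < (T.getD (i + 1) []).length →
      (T.getD i []).getD j 0 < (T.getD (i + 1) []).getD j 0) ∧
  T.flatten.Perm (List.range' 1 m)

/-- The one-line word of a permutation of `Fin m`, with values in `{1, …, m}`. -/
def permList {m : ℕ} (π : Equiv.Perm (Fin m)) : List ℕ :=
  (List.finRange m).map (fun i => (π i : ℕ) + 1)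

/-!
Schensted's argument. Bumped letters only move to lower rows, so the first row of the insertion
tableau evolves by plain row insertion. Its invariant is that the `k`-th entry of the first row
is the least last letter of a weakly increasing subsequence of length `k + 1` of the word read so
far, and that such a subsequence exists only for `k` below the row's length. Hence the number of
columns is the length of a longest weakly increasing subsequence; for a permutation these are
exactly its increasing subsequences.
-/

theorem List.append_singleton_sublist_append_singleton_iff {α : Type*} {s u : List α} {x y : α} :
    (s ++ [y]).Sublist (u ++ [x]) ↔ (s ++ [y]).Sublist u ∨ y = x ∧ s.Sublist u := by
  rw [← List.reverse_sublist, ← List.reverse_sublist (l₁ := s ++ [y])]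
  simp [List.sublist_cons_iff]

namespace RSK

variable {α : Type*} [LinearOrder α]

def rowInsert : List α → α → List α
  | [], x => [x]
  | y :: ys, x => if x < y then x :: ys else y :: rowInsert ys x

def firstRow (w : List α) : List α := w.foldl rowInsert []

theorem insertInRow_fst (r : List ℕ) (x : ℕ) : (insertInRow r x).1 = rowInsert r x := by
  induction r with
  | nil => rfl
  | cons y ys ih =>
    unfold insertInRow at ih ⊢
    rw [List.findIdx?_cons]
    by_cases hxy : x < y
    · simp [hxy, rowInsert]
    · cases h : ys.findIdx? (fun y => decide (x < y)) <;> simpa [h, hxy, rowInsert] using ih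

theorem rowInsertT_getD_zero (T : List (List ℕ)) (x : ℕ) :
    (rowInsertT T x).getD 0 [] = rowInsert (T.getD 0 []) x := by
  cases T with
  | nil => rfl
  | cons r rs =>
    rw [rowInsertT, ← insertInRow_fst]
    split <;> simp_all

theorem numCols_rskP (w : List ℕ) : numCols (rskP w) = (firstRow w).length := by
  suffices ∀ T, (w.foldl rowInsertT T).getD 0 [] = w.foldl rowInsert (T.getD 0 []) from
    congrArg List.length (this [])
  induction w with
  | nil => exact fun _ => rfl
  | cons x w ih =>
    exact fun T => by rw [List.foldl_cons, List.foldl_cons, ih, rowInsertT_getD_zero]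

theorem mem_rowInsert {r : List α} {x z : α} (hz : z ∈ rowInsert r x) : z = x ∨ z ∈ r := by
  induction r with
  | nil => simpa [rowInsert] using hz
  | cons y ys ih =>
    rw [rowInsert] at hz
    split_ifs at hz
    · rcases List.mem_cons.1 hz with rfl | h
      exacts [Or.inl rfl, Or.inr (List.mem_cons_of_mem _ h)]
    · rcases List.mem_cons.1 hz with rfl | h
      · exact Or.inr List.mem_cons_self
      · exact (ih h).imp_right (List.mem_cons_of_mem _)

theorem pairwise_rowInsert {r : List α} (x : α) (hr : r.Pairwise (· ≤ ·)) :
    (rowInsert r x).Pairwise (· ≤ ·) := by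
  induction r with
  | nil => simp [rowInsert]
  | cons y ys ih =>
    rw [List.pairwise_cons] at hr
    unfold rowInsert
    split_ifs with hxy
    · exact List.pairwise_cons.2 ⟨fun z hz => hxy.le.trans (hr.1 z hz), hr.2⟩
    · refine List.pairwise_cons.2 ⟨fun z hz => ?_, ih hr.2⟩
      rcases mem_rowInsert hz with rfl | hz
      exacts [not_lt.1 hxy, hr.1 z hz]

theorem pairwise_firstRow (w : List α) : (firstRow w).Pairwise (· ≤ ·) := by
  suffices ∀ r : List α, r.Pairwise (· ≤ ·) → (w.foldl rowInsert r).Pairwise (· ≤ ·) from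
    this [] List.Pairwise.nil
  induction w with
  | nil => exact fun _ h => h
  | cons x w ih => exact fun r hr => ih _ (pairwise_rowInsert x hr)

theorem exists_getElem?_rowInsert_le_iff {r : List α} (hr : r.Pairwise (· ≤ ·)) (x v : α)
    (k : ℕ) : (∃ y ∈ (rowInsert r x)[k]?, y ≤ v) ↔
      (∃ y ∈ r[k]?, y ≤ v) ∨ x ≤ v ∧ ∀ j, k = j + 1 → ∃ y ∈ r[j]?, y ≤ x := by
  induction r generalizing k with
  | nil => cases k <;> simp [rowInsert]
  | cons y ys ih =>
    rw [List.pairwise_cons] at hr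
    unfold rowInsert
    split_ifs with hxy
    · cases k with
      | zero => simpa using fun hyv => (hxy.trans_le hyv).le
      | succ k =>
        have hyz : ∀ z ∈ (y :: ys)[k]?, x < z := fun z hz =>
          hxy.trans_le ((List.mem_cons.1 (List.mem_of_getElem? hz)).elim ge_of_eq (hr.1 z))
        simpa using fun _ z hz hzx => absurd hzx (not_le.2 (hyz z (Option.mem_def.2 hz)))
    · cases k with
      | zero => simpa using fun hxv => (not_lt.1 hxy).trans hxv
      | succ k =>
        simp only [List.getElem?_cons_succ, ih hr.2]
        cases k <;> simp [not_lt.1 hxy]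

def HasSortedSublistEndingLE (w : List α) (k : ℕ) (v : α) : Prop :=
  ∃ s y, (s ++ [y]).Sublist w ∧ (s ++ [y]).Pairwise (· ≤ ·) ∧ s.length = k ∧ y ≤ v

theorem hasSortedSublistEndingLE_append_singleton_iff (u : List α) (x v : α) (k : ℕ) :
    HasSortedSublistEndingLE (u ++ [x]) k v ↔ HasSortedSublistEndingLE u k v ∨
      x ≤ v ∧ ∀ j, k = j + 1 → HasSortedSublistEndingLE u j x := by
  constructor
  · rintro ⟨s, y, hsub, hs, rfl, hyv⟩
    rcases List.append_singleton_sublist_append_singleton_iff.1 hsub with hsub | ⟨rfl, hsu⟩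
    · exact Or.inl ⟨s, y, hsub, hs, rfl, hyv⟩
    refine Or.inr ⟨hyv, fun j hj => ?_⟩
    rcases s.eq_nil_or_concat with rfl | ⟨t, z, rfl⟩
    · simp at hj
    rw [List.concat_eq_append] at hs hsu hj
    rw [List.pairwise_append] at hs
    exact ⟨t, z, hsu, hs.1, by simpa using hj, hs.2.2 z (by simp) y (by simp)⟩
  · rintro (⟨s, y, hsub, hs, rfl, hyv⟩ | ⟨hxv, hx⟩)
    · exact ⟨s, y, hsub.trans (List.sublist_append_left u [x]), hs, rfl, hyv⟩
    cases k with
    | zero => exact ⟨[], x, by simp, by simp, rfl, hxv⟩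
    | succ j =>
      obtain ⟨t, z, hsub, hs, rfl, hzx⟩ := hx j rfl
      refine ⟨t ++ [z], x, hsub.append (List.Sublist.refl _), ?_, by simp, hxv⟩
      refine List.pairwise_append.2 ⟨hs, by simp, fun a ha b hb => ?_⟩
      rw [List.mem_singleton.1 hb]
      rcases List.mem_append.1 ha with ha | ha
      · exact ((List.pairwise_append.1 hs).2.2 a ha z (by simp)).trans hzx
      · rwa [List.mem_singleton.1 ha]

theorem exists_getElem?_firstRow_le_iff (w : List α) (k : ℕ) (v : α) :
    (∃ y ∈ (firstRow w)[k]?, y ≤ v) ↔ HasSortedSublistEndingLE w k v := by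
  induction w using List.reverseRecOn generalizing k v with
  | nil => simp [firstRow, HasSortedSublistEndingLE]
  | append_singleton u x ih =>
    rw [firstRow, List.foldl_append, List.foldl_cons, List.foldl_nil, ← firstRow,
      exists_getElem?_rowInsert_le_iff (pairwise_firstRow u),
      hasSortedSublistEndingLE_append_singleton_iff]
    simp only [ih]

theorem lt_length_firstRow_iff (w : List α) (k : ℕ) :
    k < (firstRow w).length ↔
      ∃ s : List α, s.Sublist w ∧ s.Pairwise (· ≤ ·) ∧ s.length = k + 1 := by
  constructor
  · intro hk
    obtain ⟨s, y, hsub, hs, hlen, -⟩ :=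
      (exists_getElem?_firstRow_le_iff w k _).1 ⟨_, List.getElem?_eq_getElem hk, le_rfl⟩
    exact ⟨s ++ [y], hsub, hs, by simp [hlen]⟩
  · rintro ⟨s, hsub, hs, hlen⟩
    rcases s.eq_nil_or_concat with rfl | ⟨t, y, rfl⟩
    · simp at hlen
    rw [List.concat_eq_append] at hsub hs hlen
    obtain ⟨z, hz, -⟩ := (exists_getElem?_firstRow_le_iff w k y).2
      ⟨t, y, hsub, hs, by simpa using hlen, le_rfl⟩
    exact (List.getElem?_eq_some_iff.1 hz).1

theorem length_firstRow_le_iff (w : List α) (d : ℕ) :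
    (firstRow w).length ≤ d ↔
      ∀ s : List α, s.Sublist w → s.Pairwise (· ≤ ·) → s.length ≤ d := by
  constructor
  · intro hd s hsub hs
    rcases Nat.eq_zero_or_eq_succ_pred s.length with h | h
    · omega
    · have := (lt_length_firstRow_iff w _).2 ⟨s, hsub, hs, h⟩
      omega
  · intro H
    by_contra! hd
    obtain ⟨s, hsub, hs, hlen⟩ := (lt_length_firstRow_iff w d).1 hd
    have := H s hsub hs
    omega

theorem exists_sortedLT_sublist_ofFn_iff {m : ℕ} (f : Fin m → α) (L : ℕ) :
    (∃ s : List α, s.Sublist (List.ofFn f) ∧ s.SortedLT ∧ s.length = L) ↔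
      ∃ t : Fin L → Fin m, StrictMono t ∧ StrictMono (f ∘ t) := by
  constructor
  · rintro ⟨s, hsub, hs, rfl⟩
    obtain ⟨e, he⟩ := List.sublist_iff_exists_fin_orderEmbedding_get_eq.1 hsub
    refine ⟨fun j => Fin.cast List.length_ofFn (e j), fun _ _ h => e.strictMono h, ?_⟩
    have hget : f ∘ (fun j => Fin.cast List.length_ofFn (e j)) = s.get := by
      funext j
      rw [Function.comp_apply, he, List.get_ofFn]
    exact hget ▸ hs.strictMono_get
  · rintro ⟨t, ht, hft⟩
    refine ⟨List.ofFn (f ∘ t), ?_, List.sortedLT_ofFn_iff.2 hft, List.length_ofFn⟩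
    let e : Fin (List.ofFn (f ∘ t)).length ↪o Fin (List.ofFn f).length :=
      OrderEmbedding.ofStrictMono (fun j => Fin.cast List.length_ofFn.symm
        (t (Fin.cast List.length_ofFn j))) fun _ _ h => ht h
    refine List.sublist_iff_exists_fin_orderEmbedding_get_eq.2 ⟨e, fun j => ?_⟩
    simp only [List.get_eq_getElem, List.getElem_ofFn, Function.comp_apply]
    rfl

theorem forall_sorted_sublist_ofFn_length_le_iff {m : ℕ} {f : Fin m → α}
    (hf : Function.Injective f) (d : ℕ) :
    (∀ s : List α, s.Sublist (List.ofFn f) → s.Pairwise (· ≤ ·) → s.length ≤ d) ↔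
      ∀ (L : ℕ) (t : Fin L → Fin m), StrictMono t → StrictMono (f ∘ t) → L ≤ d := by
  constructor
  · intro H L t ht hft
    obtain ⟨s, hsub, hs, rfl⟩ := (exists_sortedLT_sublist_ofFn_iff f L).2 ⟨t, ht, hft⟩
    exact H s hsub hs.sortedLE.pairwise
  · intro H s hsub hs
    have hlt : s.SortedLT := hs.sortedLE.sortedLT_of_nodup (hsub.nodup (List.nodup_ofFn.2 hf))
    obtain ⟨t, ht, hft⟩ := (exists_sortedLT_sublist_ofFn_iff f _).1 ⟨s, hsub, hlt, rfl⟩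
    exact H _ t ht hft

end RSK

/-- A permutation `π` of `[m]` has no increasing subsequence of length greater
than `d` if and only if its RSK insertion tableau `P(π)` has at most `d` columns. -/
theorem no_long_increasing_iff_rskP_cols_le (m d : ℕ) (π : Equiv.Perm (Fin m)) :
    (∀ (L : ℕ) (t : Fin L → Fin m), StrictMono t →
        StrictMono (fun j => π (t j)) → L ≤ d) ↔
    numCols (rskP (permList π)) ≤ d := by
  have hval : StrictMono (fun i : Fin m => (i : ℕ) + 1) := fun i j hij => by simpa using hij
  rw [RSK.numCols_rskP, RSK.length_firstRow_le_iff, permList, ← List.ofFn_eq_map,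
    RSK.forall_sorted_sublist_ofFn_length_le_iff (f := fun i => (π i : ℕ) + 1)
      (hval.injective.comp π.injective)]
  refine forall₂_congr fun L t => imp_congr_right fun _ => imp_congr_left ?_
  exact ⟨fun h _ _ hab => hval (h hab), fun h _ _ hab => hval.lt_iff_lt.1 (h hab)⟩
end

section
/- If π is a permutation of [m] and (P(π), Q(π)) is its RSK pair, then P(π⁻¹) = Q(π) and Q(π⁻¹) = P(π). -/
open List

/-!
Induct on the two-line array. Let `m` be its largest value, carrying label `s`. Every other value is
smaller than `m`, so an insertion path can meet `m` only at the end of its row, and then it pushes `m`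
to the end of the next row. Consequently deleting `(m, s)` from an array `c` (giving `c'`) is
undone by one *dual* step: `Q(c)` is `Q(c')` with `s` row-inserted, and `P(c)` is `P(c')` with `m`
placed in the new box of that insertion. The same push-down fact, applied in `Q` to each later
label, shows that this dual step commutes with every later ordinary step. In the inverse array the
pair `(m, s)` becomes `(s, m)`, which comes last, and the ordinary step for it is precisely the dual
step with `P` and `Q` exchanged; induction then gives `RSK(c⁻¹) = RSK(c).swap`.
-/

theorem getD_mem_of_lt {α : Type*} {l : List α} {i : ℕ} (d : α) (h : i < l.length) : l.getD i d ∈ l := by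
  rw [List.getD_eq_getElem _ _ h]
  exact getElem_mem h

def addBox (T : List (List ℕ)) (i : ℕ) (a : ℕ) : List (List ℕ) :=
  if i < T.length then T.set i (T.getD i [] ++ [a]) else T ++ [[a]]

theorem addBox_nil (i a : ℕ) : addBox [] i a = [[a]] := by
  simp [addBox]

theorem addBox_cons_zero (row : List ℕ) (T : List (List ℕ)) (a : ℕ) :
    addBox (row :: T) 0 a = (row ++ [a]) :: T := by
  simp [addBox]

theorem addBox_cons_succ (row : List ℕ) (T : List (List ℕ)) (i a : ℕ) :
    addBox (row :: T) (i + 1) a = row :: addBox T i a := by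
  by_cases h : i < T.length <;> simp [addBox, h]

theorem mem_flatten_addBox {T : List (List ℕ)} {i a c : ℕ} (h : c ∈ (addBox T i a).flatten) :
    c = a ∨ c ∈ T.flatten := by
  induction T generalizing i with
  | nil => simpa [addBox_nil] using h
  | cons row rest ih =>
    cases i with
    | zero => simp only [addBox_cons_zero, flatten_cons, mem_append, mem_singleton] at h ⊢; tauto
    | succ i =>
      simp only [addBox_cons_succ, flatten_cons, mem_append] at h ⊢
      rcases h with h | h
      exacts [Or.inr (Or.inl h), (ih h).imp_right Or.inr]

section RowInsertion

variable {row : List ℕ} {x i : ℕ}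

theorem rowInsertT_nil (x : ℕ) : rowInsertT [] x = [[x]] := rfl

theorem newBoxRow_nil (x : ℕ) : newBoxRow [] x = 0 := rfl

theorem rowInsertT_cons_of_findIdx?_eq_none (h : row.findIdx? (fun y => decide (x < y)) = none)
    (rest : List (List ℕ)) : rowInsertT (row :: rest) x = (row ++ [x]) :: rest := by
  simp [rowInsertT, insertInRow, h]

theorem rowInsertT_cons_of_findIdx?_eq_some
    (h : row.findIdx? (fun y => decide (x < y)) = some i) (rest : List (List ℕ)) :
    rowInsertT (row :: rest) x = row.set i x :: rowInsertT rest (row.getD i 0) := by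
  obtain ⟨hi, -⟩ := findIdx?_eq_some_iff_getElem.mp h
  simp [rowInsertT, insertInRow, h, getElem?_eq_getElem hi]

theorem newBoxRow_cons_of_findIdx?_eq_none (h : row.findIdx? (fun y => decide (x < y)) = none)
    (rest : List (List ℕ)) : newBoxRow (row :: rest) x = 0 := by
  simp [newBoxRow, rowInsertT_cons_of_findIdx?_eq_none h, range_succ_eq_map, findIdx_cons]

theorem newBoxRow_cons_of_findIdx?_eq_some
    (h : row.findIdx? (fun y => decide (x < y)) = some i) (rest : List (List ℕ)) :
    newBoxRow (row :: rest) x = newBoxRow rest (row.getD i 0) + 1 := by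
  simp [newBoxRow, rowInsertT_cons_of_findIdx?_eq_some h, range_succ_eq_map, findIdx_cons,
    findIdx_map, Function.comp_def]

theorem findIdx?_lt_eq_none_of_forall_le (h : ∀ a ∈ row, a ≤ x) :
    row.findIdx? (fun y => decide (x < y)) = none :=
  findIdx?_eq_none_iff.mpr fun a ha => by simpa using h a ha

end RowInsertion

theorem newBoxRow_le (T : List (List ℕ)) (x : ℕ) : newBoxRow T x ≤ T.length := by
  induction T generalizing x with
  | nil => simp [newBoxRow_nil]
  | cons row rest ih =>
    cases h : row.findIdx? (fun y => decide (x < y)) with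
    | none => simp [newBoxRow_cons_of_findIdx?_eq_none h]
    | some i => simpa [newBoxRow_cons_of_findIdx?_eq_some h] using ih _

theorem shapeT_addBox_congr {T T' : List (List ℕ)} (h : shapeT T = shapeT T') (i a b : ℕ) :
    shapeT (addBox T i a) = shapeT (addBox T' i b) := by
  induction T generalizing T' i with
  | nil =>
    obtain rfl : T' = [] := by simpa [shapeT] using h.symm
    simp [addBox_nil, shapeT]
  | cons row rest ih =>
    obtain _ | ⟨row', rest'⟩ := T'
    · simp [shapeT] at h
    simp only [shapeT, map_cons, cons.injEq] at h
    cases i with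
    | zero => simp [addBox_cons_zero, shapeT, h.1, h.2]
    | succ i => simpa [addBox_cons_succ, shapeT, h.1] using ih h.2 i

theorem shapeT_rowInsertT (T : List (List ℕ)) (x : ℕ) :
    shapeT (rowInsertT T x) = shapeT (addBox T (newBoxRow T x) x) := by
  induction T generalizing x with
  | nil => rfl
  | cons row rest ih =>
    cases h : row.findIdx? (fun y => decide (x < y)) with
    | none =>
      rw [rowInsertT_cons_of_findIdx?_eq_none h, newBoxRow_cons_of_findIdx?_eq_none h,
        addBox_cons_zero]
    | some i =>
      rw [rowInsertT_cons_of_findIdx?_eq_some h, newBoxRow_cons_of_findIdx?_eq_some h,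
        addBox_cons_succ]
      have hrest := (ih (row.getD i 0)).trans (shapeT_addBox_congr rfl _ _ x)
      simp only [shapeT, map_cons, length_set] at hrest ⊢
      rw [hrest]

theorem mem_flatten_rowInsertT {T : List (List ℕ)} {x c : ℕ} (h : c ∈ (rowInsertT T x).flatten) :
    c = x ∨ c ∈ T.flatten := by
  induction T generalizing x with
  | nil => simpa [rowInsertT_nil] using h
  | cons row rest ih =>
    cases hf : row.findIdx? (fun y => decide (x < y)) with
    | none =>
      simp only [rowInsertT_cons_of_findIdx?_eq_none hf, flatten_cons, mem_append,
        mem_singleton] at h ⊢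
      tauto
    | some i =>
      obtain ⟨hi, -⟩ := findIdx?_eq_some_iff_getElem.mp hf
      simp only [rowInsertT_cons_of_findIdx?_eq_some hf, flatten_cons, mem_append] at h ⊢
      rcases h with h | h
      · rcases mem_or_eq_of_mem_set h with h | rfl <;> tauto
      · rcases ih h with rfl | h
        · exact Or.inr (Or.inl (getD_mem_of_lt _ hi))
        · tauto

theorem rowInsertT_of_forall_lt {T : List (List ℕ)} {m : ℕ} (h : ∀ a ∈ T.flatten, a < m) :
    rowInsertT T m = addBox T 0 m ∧ newBoxRow T m = 0 := by
  cases T with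
  | nil => exact ⟨rfl, rfl⟩
  | cons row rest =>
    have hf := findIdx?_lt_eq_none_of_forall_le fun a (ha : a ∈ row) => (h a (by simp [ha])).le
    exact ⟨by rw [rowInsertT_cons_of_findIdx?_eq_none hf, addBox_cons_zero],
      newBoxRow_cons_of_findIdx?_eq_none hf _⟩

/-- The row of a box at the end of row `r`, holding a letter larger than all others, after a row
insertion whose new box would (without that letter) lie in row `i`. -/
def bumpedRow (i r : ℕ) : ℕ := if i = r then r + 1 else r

theorem bumpedRow_self (r : ℕ) : bumpedRow r r = r + 1 := if_pos rfl

theorem bumpedRow_succ_succ (i r : ℕ) : bumpedRow (i + 1) (r + 1) = bumpedRow i r + 1 := by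
  simp [bumpedRow, apply_ite (· + 1)]

theorem bumpedRow_zero_succ (r : ℕ) : bumpedRow 0 (r + 1) = r + 1 := if_neg r.succ_ne_zero.symm

theorem bumpedRow_succ_zero (i : ℕ) : bumpedRow (i + 1) 0 = 0 := if_neg i.succ_ne_zero

theorem rowInsertT_addBox_zero_of_forall_lt {T : List (List ℕ)} {x m : ℕ}
    (hT : ∀ a ∈ T.flatten, a < m) (hx : x < m) :
    rowInsertT (addBox T 0 m) x = addBox (rowInsertT T x) (bumpedRow (newBoxRow T x) 0) m ∧
      newBoxRow (addBox T 0 m) x = bumpedRow 0 (newBoxRow T x) := by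
  cases T with
  | nil =>
    have hf : [m].findIdx? (fun y => decide (x < y)) = some 0 := by simp [hx]
    simp [addBox_nil, rowInsertT_cons_of_findIdx?_eq_some hf,
      newBoxRow_cons_of_findIdx?_eq_some hf, rowInsertT_nil, newBoxRow_nil, bumpedRow_self,
      addBox_cons_succ]
  | cons row rest =>
    rw [addBox_cons_zero]
    cases hf : row.findIdx? (fun y => decide (x < y)) with
    | none =>
      -- `x` lands where `m` sat and bumps it to the end of row `1`
      have hf' : (row ++ [m]).findIdx? (fun y => decide (x < y)) = some row.length := by
        simp [findIdx?_append, hf, hx]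
      obtain ⟨hmax, hmaxRow⟩ := rowInsertT_of_forall_lt (T := rest) fun a ha => hT a (by simp [ha])
      simp [rowInsertT_cons_of_findIdx?_eq_some hf', newBoxRow_cons_of_findIdx?_eq_some hf',
        rowInsertT_cons_of_findIdx?_eq_none hf, newBoxRow_cons_of_findIdx?_eq_none hf, hmax,
        hmaxRow, bumpedRow_self, addBox_cons_succ]
    | some i =>
      obtain ⟨hi, -⟩ := findIdx?_eq_some_iff_getElem.mp hf
      have hf' : (row ++ [m]).findIdx? (fun y => decide (x < y)) = some i := by
        simp [findIdx?_append, hf]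
      rw [rowInsertT_cons_of_findIdx?_eq_some hf', newBoxRow_cons_of_findIdx?_eq_some hf',
        rowInsertT_cons_of_findIdx?_eq_some hf, newBoxRow_cons_of_findIdx?_eq_some hf,
        bumpedRow_succ_zero, bumpedRow_zero_succ, addBox_cons_zero, getD_append _ _ _ _ hi,
        set_append_left _ _ hi]
      exact ⟨rfl, rfl⟩

theorem rowInsertT_addBox_of_forall_lt {T : List (List ℕ)} {x m r : ℕ}
    (hT : ∀ a ∈ T.flatten, a < m) (hx : x < m) (hr : r ≤ T.length) :
    rowInsertT (addBox T r m) x = addBox (rowInsertT T x) (bumpedRow (newBoxRow T x) r) m ∧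
      newBoxRow (addBox T r m) x = bumpedRow r (newBoxRow T x) := by
  induction T generalizing r x with
  | nil =>
    obtain rfl : r = 0 := by simpa using hr
    exact rowInsertT_addBox_zero_of_forall_lt hT hx
  | cons row rest ih =>
    obtain _ | r := r
    · exact rowInsertT_addBox_zero_of_forall_lt hT hx
    rw [addBox_cons_succ]
    cases hf : row.findIdx? (fun y => decide (x < y)) with
    | none =>
      rw [rowInsertT_cons_of_findIdx?_eq_none hf, newBoxRow_cons_of_findIdx?_eq_none hf,
        rowInsertT_cons_of_findIdx?_eq_none hf, newBoxRow_cons_of_findIdx?_eq_none hf,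
        bumpedRow_zero_succ, bumpedRow_succ_zero, addBox_cons_succ]
      exact ⟨rfl, rfl⟩
    | some i =>
      obtain ⟨hi, -⟩ := findIdx?_eq_some_iff_getElem.mp hf
      have hy : row.getD i 0 < m := hT _ (mem_flatten_of_mem mem_cons_self (getD_mem_of_lt _ hi))
      obtain ⟨ih₁, ih₂⟩ := ih (fun a ha => hT a (by simp [ha])) hy (by simpa using hr)
      rw [rowInsertT_cons_of_findIdx?_eq_some hf, newBoxRow_cons_of_findIdx?_eq_some hf,
        rowInsertT_cons_of_findIdx?_eq_some hf, newBoxRow_cons_of_findIdx?_eq_some hf, ih₁, ih₂,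
        bumpedRow_succ_succ, bumpedRow_succ_succ, addBox_cons_succ]
      exact ⟨rfl, rfl⟩

theorem rskStep_eq (PQ : List (List ℕ) × List (List ℕ)) (xi : ℕ × ℕ) :
    rskStep PQ xi = (rowInsertT PQ.1 xi.1, addBox PQ.2 (newBoxRow PQ.1 xi.1) xi.2) :=
  rfl

def rskStepDual (PQ : List (List ℕ) × List (List ℕ)) (xs : ℕ × ℕ) :
    List (List ℕ) × List (List ℕ) :=
  (rskStep PQ.swap xs.swap).swap

theorem rskStepDual_eq (PQ : List (List ℕ) × List (List ℕ)) (xs : ℕ × ℕ) :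
    rskStepDual PQ xs = (addBox PQ.1 (newBoxRow PQ.2 xs.2) xs.1, rowInsertT PQ.2 xs.2) :=
  rfl

theorem shapeT_rskStep {PQ : List (List ℕ) × List (List ℕ)} (h : shapeT PQ.1 = shapeT PQ.2)
    (xi : ℕ × ℕ) : shapeT (rskStep PQ xi).1 = shapeT (rskStep PQ xi).2 :=
  (shapeT_rowInsertT _ _).trans (shapeT_addBox_congr h _ _ _)

theorem rskStep_eq_rskStepDual_of_forall_lt {PQ : List (List ℕ) × List (List ℕ)} {m s : ℕ}
    (hP : ∀ a ∈ PQ.1.flatten, a < m) (hQ : ∀ a ∈ PQ.2.flatten, a < s) :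
    rskStep PQ (m, s) = rskStepDual PQ (m, s) := by
  obtain ⟨hP₁, hP₂⟩ := rowInsertT_of_forall_lt hP
  obtain ⟨hQ₁, hQ₂⟩ := rowInsertT_of_forall_lt hQ
  rw [rskStep_eq, rskStepDual_eq]
  simp only [hP₁, hP₂, hQ₁, hQ₂]

/-- The two pushes of `rowInsertT_addBox_of_forall_lt`, one in `P` and one in `Q`, match up
because `bumpedRow` is used with its arguments exchanged. -/
theorem rskStep_rskStepDual_comm {PQ : List (List ℕ) × List (List ℕ)} {x b m s : ℕ}
    (hPQ : shapeT PQ.1 = shapeT PQ.2) (hP : ∀ a ∈ PQ.1.flatten, a < m) (hx : x < m)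
    (hQ : ∀ a ∈ PQ.2.flatten, a < b) (hs : s < b) :
    rskStep (rskStepDual PQ (m, s)) (x, b) = rskStepDual (rskStep PQ (x, b)) (m, s) := by
  have hlen : PQ.1.length = PQ.2.length := by simpa [shapeT] using congrArg length hPQ
  obtain ⟨hP₁, hP₂⟩ :=
    rowInsertT_addBox_of_forall_lt hP hx ((newBoxRow_le PQ.2 s).trans hlen.ge)
  obtain ⟨hQ₁, hQ₂⟩ :=
    rowInsertT_addBox_of_forall_lt hQ hs ((newBoxRow_le PQ.1 x).trans hlen.le)
  simp only [rskStepDual_eq, rskStep_eq, hP₁, hP₂, hQ₁, hQ₂]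

theorem foldl_rskStep_rskStepDual (c : List (ℕ × ℕ)) {PQ : List (List ℕ) × List (List ℕ)}
    {m s : ℕ} (hPQ : shapeT PQ.1 = shapeT PQ.2) (hP : ∀ a ∈ PQ.1.flatten, a < m)
    (hQ : ∀ a ∈ PQ.2.flatten, ∀ b ∈ c.map Prod.snd, a < b)
    (hm : ∀ x ∈ c.map Prod.fst, x < m) (hs : ∀ b ∈ c.map Prod.snd, s < b)
    (hc : (c.map Prod.snd).Pairwise (· < ·)) :
    c.foldl rskStep (rskStepDual PQ (m, s)) = rskStepDual (c.foldl rskStep PQ) (m, s) := by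
  induction c generalizing PQ with
  | nil => rfl
  | cons xb c ih =>
    obtain ⟨x, b⟩ := xb
    simp only [map_cons, mem_cons, forall_eq_or_imp, pairwise_cons] at hQ hm hs hc
    rw [foldl_cons, rskStep_rskStepDual_comm hPQ hP hm.1 (fun a ha => (hQ a ha).1) hs.1]
    refine ih (shapeT_rskStep hPQ _) (fun a ha => ?_) (fun a ha b' hb' => ?_) hm.2 hs.2 hc.2
    · rcases mem_flatten_rowInsertT ha with rfl | ha
      exacts [hm.1, hP a ha]
    · rcases mem_flatten_addBox ha with rfl | ha
      exacts [hc.1 b' hb', (hQ a ha).2 b' hb']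

/-- A two-line array is given as its list of (value, label) pairs. -/
def rskPairs (c : List (ℕ × ℕ)) : List (List ℕ) × List (List ℕ) :=
  c.foldl rskStep ([], [])

theorem rskPairs_append_singleton (c : List (ℕ × ℕ)) (p : ℕ × ℕ) :
    rskPairs (c ++ [p]) = rskStep (rskPairs c) p :=
  foldl_concat _ _ _ _

theorem shapeT_rskPairs (c : List (ℕ × ℕ)) : shapeT (rskPairs c).1 = shapeT (rskPairs c).2 := by
  induction c using reverseRecOn with
  | nil => rfl
  | append_singleton c p ih => rw [rskPairs_append_singleton]; exact shapeT_rskStep ih p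

theorem flatten_rskPairs_fst_subset (c : List (ℕ × ℕ)) :
    (rskPairs c).1.flatten ⊆ c.map Prod.fst := by
  induction c using reverseRecOn with
  | nil => simp [rskPairs]
  | append_singleton c p ih =>
    intro a ha
    rw [rskPairs_append_singleton, rskStep_eq] at ha
    rcases mem_flatten_rowInsertT ha with rfl | ha
    · simp
    · simpa using Or.inl (ih ha)

theorem flatten_rskPairs_snd_subset (c : List (ℕ × ℕ)) :
    (rskPairs c).2.flatten ⊆ c.map Prod.snd := by
  induction c using reverseRecOn with
  | nil => simp [rskPairs]
  | append_singleton c p ih =>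
    intro a ha
    rw [rskPairs_append_singleton, rskStep_eq] at ha
    rcases mem_flatten_addBox ha with rfl | ha
    · simp
    · simpa using Or.inl (ih ha)

theorem rskPairs_insert_max {c₁ c₂ : List (ℕ × ℕ)} {m s : ℕ}
    (hm : ∀ x ∈ (c₁ ++ c₂).map Prod.fst, x < m)
    (hc : ((c₁ ++ (m, s) :: c₂).map Prod.snd).Pairwise (· < ·)) :
    rskPairs (c₁ ++ (m, s) :: c₂) = rskStepDual (rskPairs (c₁ ++ c₂)) (m, s) := by
  simp only [map_append, map_cons, pairwise_append, pairwise_cons, mem_cons,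
    forall_eq_or_imp] at hc
  obtain ⟨hc₁, ⟨hs, hc₂⟩, hc₁₂⟩ := hc
  have hP : ∀ a ∈ (rskPairs c₁).1.flatten, a < m := fun a ha =>
    hm a (by simpa using Or.inl (flatten_rskPairs_fst_subset c₁ ha))
  have hQ : ∀ a ∈ (rskPairs c₁).2.flatten, a ∈ c₁.map Prod.snd := fun a ha =>
    flatten_rskPairs_snd_subset c₁ ha
  calc rskPairs (c₁ ++ (m, s) :: c₂)
      = c₂.foldl rskStep (rskStep (rskPairs c₁) (m, s)) := by
        rw [rskPairs, foldl_append, foldl_cons, rskPairs]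
    _ = c₂.foldl rskStep (rskStepDual (rskPairs c₁) (m, s)) := by
        rw [rskStep_eq_rskStepDual_of_forall_lt hP fun a ha => (hc₁₂ a (hQ a ha)).1]
    _ = rskStepDual (c₂.foldl rskStep (rskPairs c₁)) (m, s) :=
        foldl_rskStep_rskStepDual c₂ (shapeT_rskPairs c₁) hP (fun a ha => (hc₁₂ a (hQ a ha)).2)
          (fun x hx => hm x (by simp_all)) hs hc₂
    _ = rskStepDual (rskPairs (c₁ ++ c₂)) (m, s) := by rw [rskPairs, rskPairs, foldl_append]

theorem rskPairs_eq_swap_of_perm {c d : List (ℕ × ℕ)} (hc : (c.map Prod.snd).Pairwise (· < ·))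
    (hd : (d.map Prod.snd).Pairwise (· < ·)) (hcd : (d.map Prod.swap).Perm c) :
    rskPairs d = (rskPairs c).swap := by
  induction d using reverseRecOn generalizing c with
  | nil =>
    obtain rfl : c = [] := by simpa using hcd.symm
    rfl
  | append_singleton d p ih =>
    obtain ⟨s, m⟩ := p
    obtain ⟨c₁, c₂, rfl⟩ := append_of_mem (hcd.subset (by simp) : (m, s) ∈ c)
    have hcd' : (d.map Prod.swap).Perm (c₁ ++ c₂) :=
      ((perm_append_singleton _ _).symm.trans (by simpa using hcd.trans perm_middle)).cons_inv
    simp only [map_append, map_cons, map_nil, pairwise_append, pairwise_singleton,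
      mem_singleton, forall_eq, true_and] at hd
    have hm : ∀ x ∈ (c₁ ++ c₂).map Prod.fst, x < m := fun x hx =>
      hd.2 x (by simpa [Function.comp_def] using (hcd'.map Prod.fst).symm.subset hx)
    have hc' : ((c₁ ++ c₂).map Prod.snd).Pairwise (· < ·) :=
      hc.sublist ((sublist_cons_self _ _).append_left c₁ |>.map _)
    rw [rskPairs_append_singleton, ih hc' hd.1 hcd', rskPairs_insert_max hm hc]
    rfl

def permArray {m : ℕ} (σ : Equiv.Perm (Fin m)) : List (ℕ × ℕ) :=
  (finRange m).map fun i => ((σ i : ℕ) + 1, (i : ℕ) + 1)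

theorem rskPQ_permList {m : ℕ} (σ : Equiv.Perm (Fin m)) :
    rskPQ (permList σ) = rskPairs (permArray σ) := by
  have hrange : range' 1 m = (finRange m).map fun i : Fin m => (i : ℕ) + 1 := by
    apply ext_getElem <;> simp [Nat.add_comm]
  rw [rskPQ, permList, length_map, length_finRange, hrange, zip_map', rskPairs, permArray]

theorem pairwise_snd_permArray {m : ℕ} (σ : Equiv.Perm (Fin m)) :
    ((permArray σ).map Prod.snd).Pairwise (· < ·) := by
  simpa [permArray, pairwise_map] using pairwise_lt_finRange m

theorem map_swap_permArray_inv_perm {m : ℕ} (σ : Equiv.Perm (Fin m)) :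
    ((permArray σ⁻¹).map Prod.swap).Perm (permArray σ) := by
  have h : (permArray σ⁻¹).map Prod.swap = ((finRange m).map ⇑σ⁻¹).map
      fun i => ((σ i : ℕ) + 1, (i : ℕ) + 1) := by
    simp [permArray, Function.comp_def]
  rw [h]
  exact (Equiv.Perm.map_finRange_perm σ⁻¹).map _

/-- **Symmetry Theorem for RSK.** If `π` is a permutation of `[m]` with RSK pair
`(P(π), Q(π))`, then `P(π⁻¹) = Q(π)` and `Q(π⁻¹) = P(π)`. -/
theorem rsk_symmetry (m : ℕ) (π : Equiv.Perm (Fin m)) :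
    (rskPQ (permList π⁻¹)).1 = (rskPQ (permList π)).2 ∧
    (rskPQ (permList π⁻¹)).2 = (rskPQ (permList π)).1 := by
  have hswap : rskPQ (permList π⁻¹) = (rskPQ (permList π)).swap := by
    rw [rskPQ_permList, rskPQ_permList]
    exact rskPairs_eq_swap_of_perm (pairwise_snd_permArray π) (pairwise_snd_permArray π⁻¹)
      (map_swap_permArray_inv_perm π)
  exact ⟨congrArg Prod.fst hswap, congrArg Prod.snd hswap⟩
end

section
/- The RSK correspondence is a bijection between permutations of [m] and pairs (P, Q) of standard Young tableaux with entries [m] having the same shape. -/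
/-!
Row insertion can be undone once one knows the row in which it created the new box: removing
that box and bumping its entry back up, row by row (`rowUninsertT`), restores the tableau and
the inserted letter. The recording tableau `Q` carries exactly this information: after `k` steps
the label `k` is the largest entry of `Q`, so it sits at the end of the row of the last new box,
which is a corner. Hence every RSK step is invertible on pairs `(P, Q)` of tableaux of the same
shape whose `Q` has entries `1, …, k` (`IsRSKState`), and induction on `k` shows that the RSK map
is injective on words with distinct letters and reaches every such pair.
-/

namespace List

variable {α : Type*}

theorem getD_set_of_ne (l : List α) (d x : α) {i j : ℕ} (h : i ≠ j) :
    (l.set i x).getD j d = l.getD j d := by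
  grind

theorem getD_set_self {l : List α} {i : ℕ} (h : i < l.length) (x d : α) :
    (l.set i x).getD i d = x := by
  grind

theorem getD_concat_length (l : List α) (x d : α) : (l ++ [x]).getD l.length d = x := by
  grind

theorem set_getD_self (l : List α) (i : ℕ) (d : α) : l.set i (l.getD i d) = l := by
  rcases lt_or_ge i l.length with hi | hi
  · rw [getD_eq_getElem l d hi, set_getElem_self]
  · exact set_eq_of_length_le hi

theorem getD_mem {l : List α} {i : ℕ} (h : i < l.length) (d : α) : l.getD i d ∈ l := by
  grind

theorem lt_length_of_getD_ne_nil {L : List (List α)} {i : ℕ} (h : L.getD i [] ≠ []) :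
    i < L.length := by
  by_contra hi
  exact h (getD_eq_default L [] (not_lt.1 hi))

theorem mem_flatten_of_mem_getD {L : List (List α)} {i : ℕ} {z : α} (h : z ∈ L.getD i []) :
    z ∈ L.flatten := by
  have hi := lt_length_of_getD_ne_nil (ne_nil_of_mem h)
  rw [getD_eq_getElem L [] hi] at h
  exact mem_flatten.2 ⟨_, getElem_mem hi, h⟩

theorem set_append_singleton_perm {l : List α} {i : ℕ} (hi : i < l.length) (x d : α) :
    (l.set i x ++ [l.getD i d]).Perm (x :: l) := by
  induction l generalizing i with
  | nil => simp at hi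
  | cons a l ih =>
    cases i with
    | zero => simp
    | succ i => simpa using ((ih (by simpa using hi)).cons a).trans (Perm.swap x a l)

theorem range'_one_succ_perm (k : ℕ) : (range' 1 (k + 1)).Perm ((k + 1) :: range' 1 k) := by
  rw [range'_1_concat, Nat.add_comm 1 k]
  exact perm_append_singleton _ _

variable [LinearOrder α]

theorem SortedLT.getD_lt_getD {l : List α} (h : l.SortedLT) (d : α) {i j : ℕ} (hij : i < j)
    (hj : j < l.length) : l.getD i d < l.getD j d := by
  rw [getD_eq_getElem l d (hij.trans hj), getD_eq_getElem l d hj]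
  exact h.getElem_lt_getElem_of_lt hij

theorem SortedLT.getD_le_getD {l : List α} (h : l.SortedLT) (d : α) {i j : ℕ} (hij : i ≤ j)
    (hj : j < l.length) : l.getD i d ≤ l.getD j d := by
  rcases hij.lt_or_eq with hij | rfl
  · exact (h.getD_lt_getD d hij hj).le
  · exact le_rfl

theorem SortedLT.set {l : List α} (h : l.SortedLT) (d : α) {i : ℕ} {x : α}
    (hlow : ∀ j < i, l.getD j d < x) (hhigh : ∀ j, i < j → j < l.length → x < l.getD j d) :
    (l.set i x).SortedLT := by
  refine sortedLT_of_getElem_lt_getElem_of_lt fun a b ha hb hab => ?_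
  simp only [length_set] at ha hb
  simp only [getElem_set]
  have hlt := h.getD_lt_getD d hab hb
  rw [getD_eq_getElem l d ha, getD_eq_getElem l d hb] at hlt
  split_ifs with hia hib hib
  · omega
  · simpa only [getD_eq_getElem l d hb] using hhigh b (hia ▸ hab) hb
  · simpa only [getD_eq_getElem l d ha] using hlow a (hib ▸ hab)
  · exact hlt

theorem SortedLT.concat {l : List α} (h : l.SortedLT) {x : α} (hx : ∀ z ∈ l, z < x) :
    (l ++ [x]).SortedLT :=
  (pairwise_append.2 ⟨h.pairwise, pairwise_singleton _ _, by simpa using hx⟩).sortedLT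

theorem SortedLT.dropLast {l : List α} (h : l.SortedLT) : l.dropLast.SortedLT :=
  (h.pairwise.sublist (dropLast_sublist l)).sortedLT

theorem SortedLT.getLast?_eq_of_forall_le {l : List α} (h : l.SortedLT) {c : α} (hc : c ∈ l)
    (hmax : ∀ a ∈ l, a ≤ c) : l.getLast? = some c := by
  have hne := ne_nil_of_mem hc
  rw [getLast?_eq_some_getLast hne, Option.some_inj]
  refine le_antisymm (hmax _ (getLast_mem hne)) ?_
  obtain ⟨j, hj, rfl⟩ := mem_iff_getElem.1 hc
  rw [getLast_eq_getElem]
  exact (h.getElem_le_getElem_iff).2 (by omega)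

theorem SortedLT.lt_of_mem_dropLast {l : List α} (h : l.SortedLT) {c : α}
    (hc : l.getLast? = some c) {z : α} (hz : z ∈ l.dropLast) : z < c := by
  have := h.pairwise
  rw [← dropLast_append_getLast? c hc, pairwise_append] at this
  exact this.2.2 z hz c (mem_singleton_self c)

end List

namespace RSK

open List

/-! ### Inserting into and unbumping from a single row -/

def IsBumpPos (row : List ℕ) (x i : ℕ) : Prop :=
  i < row.length ∧ x < row.getD i 0 ∧ ∀ j < i, row.getD j 0 ≤ x

theorem insertInRow_of_forall_le {row : List ℕ} {x : ℕ} (h : ∀ z ∈ row, z ≤ x) :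
    insertInRow row x = (row ++ [x], none) := by
  have : row.findIdx? (fun y => decide (x < y)) = none :=
    findIdx?_eq_none_iff.2 fun z hz => by simpa using h z hz
  simp only [insertInRow, this]

theorem insertInRow_of_isBumpPos {row : List ℕ} {x i : ℕ} (h : IsBumpPos row x i) :
    insertInRow row x = (row.set i x, some (row.getD i 0)) := by
  obtain ⟨hi, hlt, hle⟩ := h
  rw [getD_eq_getElem row 0 hi] at hlt ⊢
  have : row.findIdx? (fun y => decide (x < y)) = some i := by
    refine findIdx?_eq_some_iff_getElem.2 ⟨hi, by simpa using hlt, fun j hj => ?_⟩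
    have := hle j hj
    rw [getD_eq_getElem row 0 (hj.trans hi)] at this
    simpa using this
  simp [insertInRow, this, getElem?_eq_getElem hi]

theorem forall_le_or_exists_isBumpPos (row : List ℕ) (x : ℕ) :
    (∀ z ∈ row, z ≤ x) ∨ ∃ i, IsBumpPos row x i := by
  by_cases h : ∃ z ∈ row, x < z
  · have hi : row.findIdx (fun y => decide (x < y)) < row.length :=
      findIdx_lt_length_of_exists (by simpa using h)
    refine Or.inr ⟨_, hi, ?_, fun j hj => ?_⟩
    · rw [getD_eq_getElem row 0 hi]
      simpa using findIdx_getElem (w := hi)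
    · rw [getD_eq_getElem row 0 (hj.trans hi)]
      simpa using not_of_lt_findIdx hj
  · exact Or.inl fun z hz => not_lt.1 fun hxz => h ⟨z, hz, hxz⟩

theorem IsBumpPos.sortedLT_set {row : List ℕ} {x i : ℕ} (hb : IsBumpPos row x i)
    (hrow : row.SortedLT) (hx : x ∉ row) : (row.set i x).SortedLT :=
  hrow.set 0
    (fun _ hj => (hb.2.2 _ hj).lt_of_ne fun h => hx (h ▸ getD_mem (hj.trans hb.1) 0))
    (fun _ hij hj => hb.2.1.trans_le (hrow.getD_le_getD 0 hij.le hj))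

def ColStrict (upper lower : List ℕ) : Prop :=
  lower.length ≤ upper.length ∧ ∀ j < lower.length, upper.getD j 0 < lower.getD j 0

theorem colStrict_nil (upper : List ℕ) : ColStrict upper [] :=
  ⟨Nat.zero_le _, fun _ h => absurd h (Nat.not_lt_zero _)⟩

theorem ColStrict.append_singleton_left {upper lower : List ℕ} (h : ColStrict upper lower)
    (x : ℕ) : ColStrict (upper ++ [x]) lower :=
  ⟨h.1.trans (by simp), fun j hj => by
    rw [getD_append _ _ _ _ (hj.trans_le h.1)]; exact h.2 j hj⟩

theorem ColStrict.dropLast_left {upper lower : List ℕ} (h : ColStrict upper lower)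
    (hlen : lower.length < upper.length) : ColStrict upper.dropLast lower :=
  ⟨by rw [length_dropLast]; omega, fun j hj => by
    rw [getD_eq_getElem upper.dropLast 0 (by rw [length_dropLast]; omega), getElem_dropLast,
      ← getD_eq_getElem upper 0]
    exact h.2 j hj⟩

theorem ColStrict.dropLast_right {upper lower : List ℕ} (h : ColStrict upper lower) :
    ColStrict upper lower.dropLast :=
  ⟨by rw [length_dropLast]; exact Nat.sub_le_of_le_add (by have := h.1; omega), fun j hj => by
    rw [length_dropLast] at hj
    rw [getD_eq_getElem lower.dropLast 0 (by rw [length_dropLast]; omega), getElem_dropLast,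
      ← getD_eq_getElem lower 0 (by omega)]
    exact h.2 j (by omega)⟩

theorem ColStrict.append_singleton_right {upper lower : List ℕ} (h : ColStrict upper lower)
    (hlen : lower.length < upper.length) {x : ℕ} (hx : ∀ z ∈ upper, z < x) :
    ColStrict upper (lower ++ [x]) := by
  refine ⟨by simpa using hlen, fun j hj => ?_⟩
  rw [length_append, length_singleton] at hj
  rcases (Nat.lt_succ_iff.1 hj).lt_or_eq with hj | rfl
  · rw [getD_append _ _ _ _ hj]; exact h.2 j hj
  · rw [getD_concat_length]; exact hx _ (getD_mem hlen 0)

-- `y = row[i]` enters `next` at a column `q ≤ i`, because `next[i] > row[i] = y`.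
theorem ColStrict.set_insertInRow {row next : List ℕ} {x i : ℕ} (hcol : ColStrict row next)
    (hrow : row.SortedLT) (hnext : next.SortedLT) (hb : IsBumpPos row x i) :
    ColStrict (row.set i x) (insertInRow next (row.getD i 0)).1 := by
  obtain ⟨hi, hxy, -⟩ := hb
  set y := row.getD i 0
  have hleft : ∀ j < i, row.getD j 0 < y := fun j hj => hrow.getD_lt_getD 0 hj hi
  rcases forall_le_or_exists_isBumpPos next y with hle | ⟨q, hq, hyq, hqle⟩
  · rw [insertInRow_of_forall_le hle]
    have hlen : next.length ≤ i := not_lt.1 fun h =>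
      (hle _ (getD_mem h 0)).not_gt (hcol.2 i h)
    refine ⟨by simp; omega, fun j hj => ?_⟩
    rw [length_append, length_singleton] at hj
    rcases (Nat.lt_succ_iff.1 hj).lt_or_eq with hj | rfl
    · rw [getD_append _ _ _ _ hj, getD_set_of_ne _ _ _ (by omega)]
      exact hcol.2 j hj
    · rw [getD_concat_length]
      rcases hlen.lt_or_eq with hlt | heq
      · rw [getD_set_of_ne _ _ _ hlt.ne']; exact hleft _ hlt
      · rw [heq, getD_set_self hi]; exact hxy
  · rw [insertInRow_of_isBumpPos ⟨hq, hyq, hqle⟩]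
    have hqi : q ≤ i := not_lt.1 fun h =>
      (hqle i h).not_gt (hcol.2 i (h.trans hq))
    refine ⟨by simpa using hcol.1, fun j hj => ?_⟩
    rw [length_set] at hj
    rcases eq_or_ne j i with rfl | hji
    · rw [getD_set_self hi]
      refine hxy.trans_le ?_
      rcases hqi.lt_or_eq with hqi | rfl
      · rw [getD_set_of_ne _ _ _ hqi.ne]
        exact hyq.le.trans (hnext.getD_le_getD 0 hqi.le hj)
      · rw [getD_set_self hq]
    · rw [getD_set_of_ne _ _ _ (Ne.symm hji)]
      rcases eq_or_ne j q with rfl | hjq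
      · rw [getD_set_self hq]; exact hleft j (hqi.lt_of_ne hji)
      · rw [getD_set_of_ne _ _ _ (Ne.symm hjq)]; exact hcol.2 j hj

-- Dually, `y` had entered `next` at a column `q ≤ i`, because `row[j] > y` for `j > i`.
theorem ColStrict.set_of_insertInRow {row next : List ℕ} {y i : ℕ}
    (hcol : ColStrict row (insertInRow next y).1) (hnext : next.SortedLT)
    (hlow : ∀ j ≤ i, row.getD j 0 < y)
    (hhigh : ∀ j, i < j → j < row.length → y < row.getD j 0) :
    ColStrict (row.set i y) next := by
  rcases forall_le_or_exists_isBumpPos next y with hle | ⟨q, hq, hyq, hqle⟩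
  · rw [insertInRow_of_forall_le hle] at hcol
    have hlen : next.length ≤ i := not_lt.1 fun h => by
      have := hcol.2 next.length (by simp)
      rw [getD_concat_length] at this
      exact this.not_gt (hhigh _ h (by have := hcol.1; simp at this; omega))
    refine ⟨by have := hcol.1; simp at this ⊢; omega, fun j hj => ?_⟩
    rw [getD_set_of_ne _ _ _ (by omega)]
    have := hcol.2 j (by simp; omega)
    rwa [getD_append _ _ _ _ hj] at this
  · rw [insertInRow_of_isBumpPos ⟨hq, hyq, hqle⟩] at hcol
    have hqi : q ≤ i := not_lt.1 fun h => by
      have := hcol.2 q (by simpa using hq)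
      rw [getD_set_self hq] at this
      exact this.not_gt (hhigh q h (hq.trans_le (by simpa using hcol.1)))
    refine ⟨by simpa using hcol.1, fun j hj => ?_⟩
    rcases eq_or_ne j i with rfl | hji
    · rw [getD_set_self (hj.trans_le (by simpa using hcol.1))]
      rcases hqi.lt_or_eq with hqi | rfl
      · exact hyq.trans (hnext.getD_lt_getD 0 hqi hj)
      · exact hyq
    · rw [getD_set_of_ne _ _ _ (Ne.symm hji)]
      rcases eq_or_ne j q with rfl | hjq
      · exact (hlow j hqi).trans hyq
      · have := hcol.2 j (by simpa using hj)
        rwa [getD_set_of_ne _ _ _ (Ne.symm hjq)] at this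

def unbumpRow (row : List ℕ) (y : ℕ) : List ℕ × ℕ :=
  ((row.set (row.findIdx (fun z => decide (y ≤ z)) - 1) y),
    row.getD (row.findIdx (fun z => decide (y ≤ z)) - 1) 0)

theorem exists_unbumpRow_eq {row : List ℕ} (hrow : row.SortedLT) (hne : row ≠ []) {y : ℕ}
    (hy0 : row.getD 0 0 < y) (hy : y ∉ row) :
    ∃ i < row.length, unbumpRow row y = (row.set i y, row.getD i 0) ∧
      (∀ j ≤ i, row.getD j 0 < y) ∧ ∀ j, i < j → j < row.length → y < row.getD j 0 := by
  set f := row.findIdx (fun z => decide (y ≤ z))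
  have h0 : 0 < row.length := length_pos_iff.2 hne
  have hf : 0 < f := lt_findIdx_of_not h0 fun j hj => by
    obtain rfl := Nat.le_zero.1 hj
    rw [getD_eq_getElem row 0 h0] at hy0
    simpa using hy0
  have hlow : ∀ j < f, row.getD j 0 < y := fun j hj => by
    have := not_of_lt_findIdx hj
    rw [getD_eq_getElem row 0 (hj.trans_le findIdx_le_length)]
    simpa using this
  refine ⟨f - 1, by have := findIdx_le_length (p := fun z => decide (y ≤ z)) (xs := row); omega,
    rfl, fun j hj => hlow j (by omega), fun j hij hj => ?_⟩
  have hfj : f < row.length := by omega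
  have hyf : y ≤ row.getD f 0 := by
    rw [getD_eq_getElem row 0 hfj]; simpa using findIdx_getElem (w := hfj)
  exact (hyf.trans (hrow.getD_le_getD 0 (by omega) hj)).lt_of_ne
    fun h => hy (h ▸ getD_mem hj 0)

theorem unbumpRow_set {row : List ℕ} {x i : ℕ} (hrow : row.SortedLT) (hb : IsBumpPos row x i) :
    unbumpRow (row.set i x) (row.getD i 0) = (row, x) := by
  obtain ⟨hi, hxy, -⟩ := hb
  have hf : (row.set i x).findIdx (fun z => decide (row.getD i 0 ≤ z)) = i + 1 := by
    refine le_antisymm ?_ (lt_findIdx_of_not (by simpa using hi) fun j hj => ?_)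
    · rcases lt_or_ge (i + 1) row.length with hlt | hge
      · refine not_lt.1 fun h => ?_
        have := not_of_lt_findIdx h
        simp only [getElem_set, if_neg (by omega : i ≠ i + 1), decide_eq_false_iff_not,
          not_le] at this
        rw [← getD_eq_getElem row 0 hlt] at this
        exact this.not_gt (hrow.getD_lt_getD 0 (Nat.lt_succ_self i) hlt)
      · exact findIdx_le_length.trans (by simp; omega)
    · simp only [getElem_set, decide_eq_true_eq, not_le]
      split_ifs with hij
      · exact hxy
      · rw [← getD_eq_getElem row 0 (by omega)]
        exact hrow.getD_lt_getD 0 (by omega) hi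
  simp only [unbumpRow, hf, Nat.add_sub_cancel, set_set, set_getD_self, getD_set_self hi]

theorem insertInRow_set_getD {row : List ℕ} {y i : ℕ} (hrow : row.SortedLT)
    (hi : i < row.length) (hy : row.getD i 0 < y) :
    insertInRow (row.set i y) (row.getD i 0) = (row, some y) := by
  have hb : IsBumpPos (row.set i y) (row.getD i 0) i :=
    ⟨by simpa using hi, by rwa [getD_set_self hi], fun j hj => by
      rw [getD_set_of_ne _ _ _ hj.ne']; exact hrow.getD_le_getD 0 hj.le hi⟩
  rw [insertInRow_of_isBumpPos hb, set_set, set_getD_self, getD_set_self hi]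

/-! ### Tableaux -/

def IsTableau : List (List ℕ) → Prop
  | [] => True
  | row :: rs => row ≠ [] ∧ row.SortedLT ∧ ColStrict row (rs.getD 0 []) ∧ IsTableau rs

@[simp] theorem isTableau_nil : IsTableau [] := trivial

@[simp] theorem isTableau_cons {row : List ℕ} {rs : List (List ℕ)} :
    IsTableau (row :: rs) ↔
      row ≠ [] ∧ row.SortedLT ∧ ColStrict row (rs.getD 0 []) ∧ IsTableau rs :=
  Iff.rfl

theorem isTableau_iff : ∀ {T : List (List ℕ)}, IsTableau T ↔
    [] ∉ T ∧ T.IsChain (fun a b => b.length ≤ a.length) ∧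
      (∀ r ∈ T, r.IsChain (· < ·)) ∧ ∀ i j, j < (T.getD (i + 1) []).length →
        (T.getD i []).getD j 0 < (T.getD (i + 1) []).getD j 0
  | [] => by simp
  | row :: rs => by
    have hhead : (∀ b ∈ rs.head?, b.length ≤ row.length) ↔
        (rs.getD 0 []).length ≤ row.length := by
      cases rs <;> simp
    simp only [isTableau_cons, isTableau_iff (T := rs), ColStrict, mem_cons, not_or,
      isChain_cons, hhead, forall_eq_or_imp, ← sortedLT_iff_isChain]
    constructor
    · rintro ⟨hne, hrow, ⟨hlen, hcol⟩, hnil, hchain, hrows, hcols⟩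
      refine ⟨⟨Ne.symm hne, hnil⟩, ⟨hlen, hchain⟩, ⟨hrow, hrows⟩, fun i j hj => ?_⟩
      cases i with
      | zero => exact hcol j hj
      | succ i => exact hcols i j hj
    · rintro ⟨⟨hne, hnil⟩, ⟨hlen, hchain⟩, ⟨hrow, hrows⟩, hcols⟩
      exact ⟨Ne.symm hne, hrow, ⟨hlen, hcols 0⟩, hnil, hchain, hrows,
        fun i => hcols (i + 1)⟩

theorem isSYT_iff {m : ℕ} {T : List (List ℕ)} :
    isSYT m T ↔ IsTableau T ∧ T.flatten.Perm (range' 1 m) := by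
  rw [isTableau_iff]
  exact ⟨fun ⟨h₁, h₂, h₃, h₄, h₅⟩ => ⟨⟨h₁, h₂, h₃, h₄⟩, h₅⟩,
    fun ⟨⟨h₁, h₂, h₃, h₄⟩, h₅⟩ => ⟨h₁, h₂, h₃, h₄, h₅⟩⟩

namespace IsTableau

variable {T : List (List ℕ)}

theorem getD_ne_nil (hT : IsTableau T) {i : ℕ} (hi : i < T.length) : T.getD i [] ≠ [] := by
  induction T generalizing i with
  | nil => simp at hi
  | cons row rs ih =>
    cases i with
    | zero => exact hT.1
    | succ i => exact ih hT.2.2.2 (by simpa using hi)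

theorem sortedLT_getD (hT : IsTableau T) (i : ℕ) : (T.getD i []).SortedLT := by
  induction T generalizing i with
  | nil => simp [sortedLT_iff_pairwise]
  | cons row rs ih =>
    cases i with
    | zero => exact hT.2.1
    | succ i => exact ih hT.2.2.2 i

theorem colStrict_getD (hT : IsTableau T) (i : ℕ) :
    ColStrict (T.getD i []) (T.getD (i + 1) []) := by
  induction T generalizing i with
  | nil => exact colStrict_nil _
  | cons row rs ih =>
    cases i with
    | zero => exact hT.2.2.1
    | succ i => exact ih hT.2.2.2 i

theorem length_getD_le_of_le (hT : IsTableau T) {i j : ℕ} (hij : i ≤ j) :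
    (T.getD j []).length ≤ (T.getD i []).length := by
  induction j, hij using Nat.le_induction with
  | base => exact le_rfl
  | succ j _ ih => exact (hT.colStrict_getD j).1.trans ih

theorem getD_zero_lt_of_mem_flatten {row : List ℕ} {rs : List (List ℕ)}
    (hT : IsTableau (row :: rs)) {z : ℕ} (hz : z ∈ rs.flatten) : row.getD 0 0 < z := by
  induction rs generalizing row with
  | nil => simp at hz
  | cons r rs ih =>
    obtain ⟨-, -, hcol, hr, hrsorted, hrcol, hrs⟩ := hT
    have hr0 : row.getD 0 0 < r.getD 0 0 := hcol.2 0 (length_pos_iff.2 hr)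
    rcases mem_append.1 (flatten_cons ▸ hz) with hz | hz
    · obtain ⟨j, hj, rfl⟩ := mem_iff_getElem.1 hz
      rw [← getD_eq_getElem r 0 hj]
      exact hr0.trans_le (hrsorted.getD_le_getD 0 (Nat.zero_le j) hj)
    · exact hr0.trans (ih ⟨hr, hrsorted, hrcol, hrs⟩ hz)

theorem shapeT_eq {T' : List (List ℕ)} (hT : IsTableau T) (hT' : IsTableau T')
    (h : ∀ i, (T.getD i []).length = (T'.getD i []).length) : shapeT T = shapeT T' := by
  have hle : ∀ {S S' : List (List ℕ)}, IsTableau S →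
      (∀ i, (S.getD i []).length = (S'.getD i []).length) → S.length ≤ S'.length :=
    fun hS h => not_lt.1 fun hlt => hS.getD_ne_nil hlt <| length_eq_zero_iff.1 <| by
      rw [h, getD_eq_default _ _ le_rfl, length_nil]
  refine ext_getElem (by simp [shapeT, le_antisymm (hle hT h) (hle hT' fun i => (h i).symm)])
    fun i hi hi' => ?_
  simp only [shapeT, length_map] at hi hi'
  have := h i
  rw [getD_eq_getElem T [] hi, getD_eq_getElem T' [] hi'] at this
  simpa [shapeT] using this

theorem eq_nil_of_flatten_eq_nil (hT : IsTableau T)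
    (h : T.flatten = []) : T = [] := by
  cases T with
  | nil => rfl
  | cons row rs => exact absurd (append_eq_nil_iff.1 h).1 hT.1

theorem max_at_corner {Q : List (List ℕ)} (hQ : IsTableau Q) {k : ℕ}
    (hperm : Q.flatten.Perm (range' 1 (k + 1))) :
    (Q.getD (Q.findIdx (fun row => decide (k + 1 ∈ row)) + 1) []).length <
        (Q.getD (Q.findIdx (fun row => decide (k + 1 ∈ row))) []).length ∧
      (Q.getD (Q.findIdx (fun row => decide (k + 1 ∈ row))) []).getLast? = some (k + 1) := by
  set r := Q.findIdx (fun row => decide (k + 1 ∈ row))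
  have hmax : ∀ a ∈ Q.flatten, a ≤ k + 1 := fun a ha => by
    have := hperm.mem_iff.1 ha; rw [mem_range'_1] at this; omega
  obtain ⟨row, hrowQ, hk⟩ := mem_flatten.1 (hperm.mem_iff.2 (mem_range'_1.2
    (by omega : 1 ≤ k + 1 ∧ k + 1 < 1 + (k + 1))))
  have hr : r < Q.length := findIdx_lt_length_of_exists ⟨row, hrowQ, by simpa using hk⟩
  have hkr : k + 1 ∈ Q.getD r [] := by
    rw [getD_eq_getElem _ [] hr]; simpa using findIdx_getElem (w := hr)
  have hlast := (hQ.sortedLT_getD r).getLast?_eq_of_forall_le hkr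
    fun a ha => hmax a (mem_flatten_of_mem_getD ha)
  refine ⟨not_le.1 fun hle => ?_, hlast⟩
  set n := (Q.getD r []).length
  have hn : 0 < n := length_pos_iff.2 (ne_nil_of_mem hkr)
  have hcol := (hQ.colStrict_getD r).2 (n - 1) (by omega)
  rw [getD_eq_getElem?_getD, ← getLast?_eq_getElem?, hlast, Option.getD_some] at hcol
  exact hcol.not_ge (hmax _ (mem_flatten_of_mem_getD (getD_mem (by omega) 0)))


end IsTableau

theorem length_getD_eq_of_shapeT_eq {T T' : List (List ℕ)} (h : shapeT T = shapeT T') (i : ℕ) :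
    (T.getD i []).length = (T'.getD i []).length := by
  rw [← getD_map T [] length, ← getD_map T' [] length]
  exact congrArg (·.getD i 0) h

/-! ### Adding and removing a box at the end of a row -/

def addBox (Q : List (List ℕ)) (r c : ℕ) : List (List ℕ) :=
  if r < Q.length then Q.set r (Q.getD r [] ++ [c]) else Q ++ [[c]]

def dropLastInRow (Q : List (List ℕ)) (r : ℕ) : List (List ℕ) :=
  if (Q.getD r []).length ≤ 1 then Q.eraseIdx r else Q.set r (Q.getD r []).dropLast

theorem rskStep_eq (PQ : List (List ℕ) × List (List ℕ)) (xi : ℕ × ℕ) :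
    rskStep PQ xi = (rowInsertT PQ.1 xi.1, addBox PQ.2 (newBoxRow PQ.1 xi.1) xi.2) :=
  rfl

section addBox

variable {Q : List (List ℕ)} {r c : ℕ}

theorem addBox_cons_zero (q : List ℕ) (qs : List (List ℕ)) (c : ℕ) :
    addBox (q :: qs) 0 c = (q ++ [c]) :: qs := by
  simp [addBox]

theorem addBox_cons_succ (q : List ℕ) (qs : List (List ℕ)) (r c : ℕ) :
    addBox (q :: qs) (r + 1) c = q :: addBox qs r c := by
  by_cases h : r < qs.length
  · simp [addBox, h]
  · simp [addBox, h]

theorem getD_addBox_self (hr : r ≤ Q.length) : (addBox Q r c).getD r [] = Q.getD r [] ++ [c] := by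
  rcases hr.lt_or_eq with hr | rfl
  · simp only [addBox, if_pos hr, getD_set_self (l := Q) hr]
  · simp [addBox]

theorem getD_addBox_of_ne (hr : r ≤ Q.length) {i : ℕ} (hi : i ≠ r) :
    (addBox Q r c).getD i [] = Q.getD i [] := by
  rcases hr.lt_or_eq with hr | rfl
  · simp only [addBox, if_pos hr, getD_set_of_ne _ _ _ hi.symm]
  · rcases lt_or_gt_of_ne hi with hi | hi
    · simp only [addBox, lt_irrefl, if_false, getD_append _ _ _ _ hi]
    · rw [getD_eq_default _ _ (by simp [addBox]; omega), getD_eq_default _ _ hi.le]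

theorem length_getD_addBox (hr : r ≤ Q.length) (i : ℕ) :
    ((addBox Q r c).getD i []).length = (Q.getD i []).length + if i = r then 1 else 0 := by
  split_ifs with hi
  · rw [hi, getD_addBox_self hr, length_append, length_singleton]
  · rw [getD_addBox_of_ne hr hi, add_zero]

theorem flatten_addBox_perm (Q : List (List ℕ)) (r c : ℕ) :
    (addBox Q r c).flatten.Perm (c :: Q.flatten) := by
  induction Q generalizing r with
  | nil => simp [addBox]
  | cons q qs ih =>
    cases r with
    | zero =>
      rw [addBox_cons_zero, flatten_cons, flatten_cons, ← cons_append]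
      exact (perm_append_singleton c q).append_right qs.flatten
    | succ r =>
      rw [addBox_cons_succ, flatten_cons, flatten_cons]
      exact ((ih r).append_left q).trans perm_middle

theorem IsTableau.addBox (hQ : IsTableau Q) (hr : r ≤ Q.length)
    (hcorner : ∀ i < r, (Q.getD r []).length < (Q.getD i []).length)
    (hc : ∀ i ≤ r, ∀ a ∈ Q.getD i [], a < c) : IsTableau (addBox Q r c) := by
  induction Q generalizing r with
  | nil => simp [RSK.addBox, colStrict_nil, sortedLT_iff_pairwise]
  | cons q qs ih =>
    obtain ⟨hq, hqs, hcol, htab⟩ := hQ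
    cases r with
    | zero =>
      rw [addBox_cons_zero]
      exact ⟨by simp, hqs.concat (hc 0 le_rfl), hcol.append_singleton_left c, htab⟩
    | succ r =>
      rw [addBox_cons_succ]
      refine ⟨hq, hqs, ?_, ih htab (by simpa using hr) (fun i hi => hcorner (i + 1) (by omega))
        fun i hi => hc (i + 1) (by omega)⟩
      cases r with
      | zero =>
        rw [getD_addBox_self (Nat.zero_le _)]
        exact hcol.append_singleton_right (hcorner 0 (Nat.succ_pos 0)) (hc 0 (Nat.zero_le _))
      | succ r =>
        rwa [getD_addBox_of_ne (by simpa using hr) (Nat.succ_ne_zero r).symm]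

theorem findIdx_mem_addBox (hr : r ≤ Q.length) (hc : c ∉ Q.flatten) :
    (addBox Q r c).findIdx (fun row => decide (c ∈ row)) = r := by
  have hlt : r < (addBox Q r c).length := by
    rcases hr.lt_or_eq with hr | rfl <;> simp [RSK.addBox, *]
  refine (findIdx_eq hlt).2 ⟨?_, fun j hj => ?_⟩
  · rw [← getD_eq_getElem _ [] hlt, getD_addBox_self hr]
    simp
  · rw [← getD_eq_getElem _ [] (hj.trans hlt), getD_addBox_of_ne hr hj.ne]
    simpa using fun h => hc (mem_flatten_of_mem_getD h)

theorem dropLastInRow_addBox (hQ : IsTableau Q) (hr : r ≤ Q.length) :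
    dropLastInRow (addBox Q r c) r = Q := by
  rw [dropLastInRow, getD_addBox_self hr]
  rcases hr.lt_or_eq with hr | rfl
  · have hne := hQ.getD_ne_nil hr
    rw [if_neg (by simpa using hne), dropLast_concat, RSK.addBox, if_pos hr, set_set,
      set_getD_self]
  · rw [if_pos (by simp), RSK.addBox, if_neg (lt_irrefl _),
      eraseIdx_append_of_length_le le_rfl]
    simp

end addBox

section dropLastInRow

variable {Q : List (List ℕ)} {r : ℕ}

theorem dropLastInRow_cons_succ (q : List ℕ) (qs : List (List ℕ)) (r : ℕ) :
    dropLastInRow (q :: qs) (r + 1) = q :: dropLastInRow qs r := by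
  simp only [dropLastInRow, getD_cons_succ, eraseIdx_cons_succ, set_cons_succ]
  split_ifs <;> rfl

theorem getD_dropLastInRow_of_lt {i : ℕ} (hi : i < r) :
    (dropLastInRow Q r).getD i [] = Q.getD i [] := by
  unfold dropLastInRow
  split_ifs
  · simp [getD_eq_getElem?_getD, getElem?_eraseIdx, hi]
  · exact getD_set_of_ne _ _ _ hi.ne'

theorem getD_dropLastInRow_self (hcorner : (Q.getD (r + 1) []).length < (Q.getD r []).length) :
    (dropLastInRow Q r).getD r [] = (Q.getD r []).dropLast := by
  unfold dropLastInRow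
  split_ifs with h
  · have h1 : Q.getD (r + 1) [] = [] := length_eq_zero_iff.1 (by omega)
    have h2 : (Q.getD r []).dropLast = [] := length_eq_zero_iff.1 (by rw [length_dropLast]; omega)
    rw [h2, getD_eq_getElem?_getD, getElem?_eraseIdx, if_neg (lt_irrefl r)]
    rwa [getD_eq_getElem?_getD] at h1
  · exact getD_set_self (lt_length_of_getD_ne_nil fun h' => by rw [h'] at h; simp at h) _ _

theorem le_length_dropLastInRow (hr : r < Q.length) : r ≤ (dropLastInRow Q r).length := by
  unfold dropLastInRow
  split_ifs <;> simp [length_eraseIdx, hr] <;> omega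

theorem IsTableau.dropLastInRow (hQ : IsTableau Q)
    (hcorner : (Q.getD (r + 1) []).length < (Q.getD r []).length) :
    IsTableau (dropLastInRow Q r) := by
  induction Q generalizing r with
  | nil => simp [RSK.dropLastInRow]
  | cons q qs ih =>
    obtain ⟨hq, hqs, hcol, htab⟩ := hQ
    cases r with
    | zero =>
      by_cases h : q.length ≤ 1
      · simpa [RSK.dropLastInRow, h] using htab
      · simp only [RSK.dropLastInRow, getD_cons_zero, if_neg h, set_cons_zero, isTableau_cons]
        exact ⟨fun h' => h (by have := congrArg length h'; simp at this; omega), hqs.dropLast,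
          hcol.dropLast_left (by simpa using hcorner), htab⟩
    | succ r =>
      rw [dropLastInRow_cons_succ]
      refine ⟨hq, hqs, ?_, ih htab (by simpa using hcorner)⟩
      cases r with
      | zero => rw [getD_dropLastInRow_self (by simpa using hcorner)]; exact hcol.dropLast_right
      | succ r => rwa [getD_dropLastInRow_of_lt (Nat.succ_pos r)]

theorem addBox_dropLastInRow (hQ : IsTableau Q)
    (hcorner : (Q.getD (r + 1) []).length < (Q.getD r []).length) {c : ℕ}
    (hc : (Q.getD r []).getLast? = some c) : addBox (dropLastInRow Q r) r c = Q := by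
  have hsplit : (Q.getD r []).dropLast ++ [c] = Q.getD r [] := dropLast_append_getLast? c hc
  have hr : r < Q.length := lt_length_of_getD_ne_nil fun h => by rw [h] at hc; simp at hc
  unfold dropLastInRow
  split_ifs with h
  · have h1 : Q.getD (r + 1) [] = [] := length_eq_zero_iff.1 (by omega)
    have hlen : Q.length = r + 1 := le_antisymm (not_lt.1 fun h' => hQ.getD_ne_nil h' h1) hr
    have hrow : Q.getD r [] = [c] := by
      rw [← hsplit, length_eq_zero_iff.1 (by rw [length_dropLast]; omega :
        (Q.getD r []).dropLast.length = 0), nil_append]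
    rw [← dropLast_eq_eraseIdx hlen.symm, RSK.addBox, if_neg (by simp; omega), ← hrow,
      getD_eq_getElem Q [] hr]
    convert dropLast_append_getLast (l := Q) (ne_nil_of_length_pos (by omega)) using 3
    simp [getLast_eq_getElem, hlen]
  · rw [RSK.addBox, if_pos (by simpa using hr), getD_set_self hr, set_set, hsplit, set_getD_self]

end dropLastInRow

/-! ### Row insertion into a tableau and its inverse -/

def bumpRow : List (List ℕ) → ℕ → ℕ
  | [], _ => 0
  | r :: rs, x =>
    match insertInRow r x with
    | (_, none) => 0
    | (_, some y) => bumpRow rs y + 1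

section rowInsertT

variable {T : List (List ℕ)} {x : ℕ}

theorem rowInsertT_of_forall_le (h : ∀ z ∈ T.getD 0 [], z ≤ x) :
    rowInsertT T x = addBox T 0 x ∧ bumpRow T x = 0 := by
  cases T with
  | nil => simp [rowInsertT, bumpRow, addBox]
  | cons row rs =>
    have h' : ∀ z ∈ row, z ≤ x := h
    simp [rowInsertT, bumpRow, insertInRow_of_forall_le h', addBox_cons_zero]

theorem rowInsertT_cons_of_insertInRow_eq {row row' : List ℕ} {rs : List (List ℕ)} {y : ℕ}
    (h : insertInRow row x = (row', some y)) :
    rowInsertT (row :: rs) x = row' :: rowInsertT rs y ∧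
      bumpRow (row :: rs) x = bumpRow rs y + 1 := by
  simp [rowInsertT, bumpRow, h]

theorem getD_zero_rowInsertT (T : List (List ℕ)) (x : ℕ) :
    (rowInsertT T x).getD 0 [] = (insertInRow (T.getD 0 []) x).1 := by
  cases T with
  | nil => simp [rowInsertT, insertInRow]
  | cons row rs =>
    rcases h : insertInRow row x with ⟨row', _ | y⟩ <;> simp [rowInsertT, h]

theorem flatten_rowInsertT_perm (T : List (List ℕ)) (x : ℕ) :
    (rowInsertT T x).flatten.Perm (x :: T.flatten) := by
  induction T generalizing x with
  | nil => simp [rowInsertT]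
  | cons row rs ih =>
    rcases forall_le_or_exists_isBumpPos row x with hle | ⟨i, hb⟩
    · rw [(rowInsertT_of_forall_le (T := row :: rs) hle).1]
      exact flatten_addBox_perm _ _ _
    · rw [(rowInsertT_cons_of_insertInRow_eq (insertInRow_of_isBumpPos hb)).1, flatten_cons,
        flatten_cons, ← cons_append]
      calc (row.set i x ++ (rowInsertT rs (row.getD i 0)).flatten).Perm
            (row.set i x ++ row.getD i 0 :: rs.flatten) := (ih _).append_left _
        _ = (row.set i x ++ [row.getD i 0]) ++ rs.flatten := by simp
        _ ~ (x :: row) ++ rs.flatten := (set_append_singleton_perm hb.1 x 0).append_right _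

theorem length_getD_rowInsertT (T : List (List ℕ)) (x i : ℕ) :
    ((rowInsertT T x).getD i []).length =
      (T.getD i []).length + if i = bumpRow T x then 1 else 0 := by
  induction T generalizing x i with
  | nil => cases i <;> simp [rowInsertT, bumpRow]
  | cons row rs ih =>
    rcases forall_le_or_exists_isBumpPos row x with hle | ⟨j, hb⟩
    · obtain ⟨hins, hbump⟩ := rowInsertT_of_forall_le (T := row :: rs) hle
      rw [hins, hbump]
      exact length_getD_addBox (Nat.zero_le _) i
    · obtain ⟨hins, hbump⟩ :=
        rowInsertT_cons_of_insertInRow_eq (rs := rs) (insertInRow_of_isBumpPos hb)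
      rw [hins, hbump]
      cases i with
      | zero => simp
      | succ i => simp only [getD_cons_succ, ih, Nat.add_right_cancel_iff]

theorem bumpRow_le_length (T : List (List ℕ)) (x : ℕ) : bumpRow T x ≤ T.length := by
  induction T generalizing x with
  | nil => simp [bumpRow]
  | cons row rs ih =>
    rcases forall_le_or_exists_isBumpPos row x with hle | ⟨i, hb⟩
    · simp [(rowInsertT_of_forall_le (T := row :: rs) hle).2]
    · rw [(rowInsertT_cons_of_insertInRow_eq (rs := rs) (insertInRow_of_isBumpPos hb)).2]
      exact Nat.succ_le_succ (ih _)

theorem newBoxRow_eq_bumpRow (T : List (List ℕ)) (x : ℕ) : newBoxRow T x = bumpRow T x := by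
  have hlen := length_getD_rowInsertT T x
  have hlt : bumpRow T x < (rowInsertT T x).length := lt_length_of_getD_ne_nil fun h => by
    have := hlen (bumpRow T x)
    rw [h, if_pos rfl] at this
    simp at this
  refine (findIdx_eq (by simpa using hlt)).2 ⟨?_, fun j hj => ?_⟩
  · rw [getElem_range, decide_eq_true_eq, hlen, if_pos rfl]; omega
  · rw [getElem_range, decide_eq_false_iff_not, hlen, if_neg hj.ne]; omega

theorem IsTableau.rowInsertT (hT : IsTableau T) (hnd : T.flatten.Nodup) (hx : x ∉ T.flatten) :
    IsTableau (rowInsertT T x) := by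
  induction T generalizing x with
  | nil => simp [_root_.rowInsertT, colStrict_nil, sortedLT_iff_pairwise]
  | cons row rs ih =>
    obtain ⟨hne, hrow, hcol, hrs⟩ := hT
    rw [flatten_cons, nodup_append] at hnd
    rw [flatten_cons, mem_append, not_or] at hx
    rcases forall_le_or_exists_isBumpPos row x with hle | ⟨i, hb⟩
    · rw [(rowInsertT_of_forall_le (T := row :: rs) hle).1]
      refine IsTableau.addBox ⟨hne, hrow, hcol, hrs⟩ (Nat.zero_le _) (by simp)
        fun i hi a ha => ?_
      obtain rfl := Nat.le_zero.1 hi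
      exact (hle a ha).lt_of_ne fun h => hx.1 (h ▸ ha)
    · have hy : row.getD i 0 ∉ rs.flatten := fun h => hnd.2.2 _ (getD_mem hb.1 0) _ h rfl
      rw [(rowInsertT_cons_of_insertInRow_eq (insertInRow_of_isBumpPos hb)).1]
      refine ⟨ne_nil_of_length_pos (by simpa using length_pos_iff.2 hne),
        hb.sortedLT_set hrow hx.1, ?_, ih hrs hnd.2.1 hy⟩
      rw [getD_zero_rowInsertT]
      exact hcol.set_insertInRow hrow (hrs.sortedLT_getD 0) hb

end rowInsertT

def rowUninsertT : ℕ → List (List ℕ) → List (List ℕ) × ℕ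
  | 0, T => (dropLastInRow T 0, (T.getD 0 []).getLastD 0)
  | _ + 1, [] => ([], 0)
  | r + 1, row :: rs =>
    ((unbumpRow row (rowUninsertT r rs).2).1 :: (rowUninsertT r rs).1,
      (unbumpRow row (rowUninsertT r rs).2).2)

theorem unbumpRow_snd_mem {row : List ℕ} (hne : row ≠ []) (y : ℕ) :
    (unbumpRow row y).2 ∈ row := by
  have := length_pos_iff.2 hne
  have := findIdx_le_length (p := fun z => decide (y ≤ z)) (xs := row)
  exact getD_mem (by omega) 0

theorem rowUninsertT_snd_mem_getD_zero {T : List (List ℕ)} (hT : IsTableau T) {r : ℕ}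
    (hr : r < T.length) : (rowUninsertT r T).2 ∈ T.getD 0 [] := by
  cases T with
  | nil => simp at hr
  | cons row rs =>
    have hne : row ≠ [] := hT.1
    cases r with
    | zero => simp [rowUninsertT, getLastD_eq_getLast?, getLast?_eq_some_getLast hne]
    | succ r => exact unbumpRow_snd_mem hne _

theorem exists_rowUninsertT_succ_cons {row : List ℕ} {rs : List (List ℕ)}
    (hT : IsTableau (row :: rs)) (hnd : (row :: rs).flatten.Nodup) {r : ℕ} (hr : r < rs.length) :
    ∃ i < row.length, rowUninsertT (r + 1) (row :: rs) =
        (row.set i (rowUninsertT r rs).2 :: (rowUninsertT r rs).1, row.getD i 0) ∧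
      (∀ j ≤ i, row.getD j 0 < (rowUninsertT r rs).2) ∧
      ∀ j, i < j → j < row.length → (rowUninsertT r rs).2 < row.getD j 0 := by
  have hy : (rowUninsertT r rs).2 ∈ rs.flatten :=
    mem_flatten_of_mem_getD (rowUninsertT_snd_mem_getD_zero hT.2.2.2 hr)
  rw [flatten_cons, nodup_append] at hnd
  obtain ⟨i, hi, heq, hlow, hhigh⟩ := exists_unbumpRow_eq hT.2.1 hT.1
    (hT.getD_zero_lt_of_mem_flatten hy) fun h => hnd.2.2 _ h _ hy rfl
  exact ⟨i, hi, by simp only [rowUninsertT, heq], hlow, hhigh⟩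

section rowUninsertT

variable {T : List (List ℕ)}

theorem rowUninsertT_rowInsertT (hT : IsTableau T) (hnd : T.flatten.Nodup) {x : ℕ}
    (hx : x ∉ T.flatten) : rowUninsertT (bumpRow T x) (rowInsertT T x) = (T, x) := by
  induction T generalizing x with
  | nil => simp [rowInsertT, bumpRow, rowUninsertT, dropLastInRow]
  | cons row rs ih =>
    rw [flatten_cons, nodup_append] at hnd
    rw [flatten_cons, mem_append, not_or] at hx
    rcases forall_le_or_exists_isBumpPos row x with hle | ⟨i, hb⟩
    · obtain ⟨hins, hbump⟩ := rowInsertT_of_forall_le (T := row :: rs) hle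
      rw [hins, hbump, rowUninsertT, dropLastInRow_addBox hT (Nat.zero_le _),
        getD_addBox_self (Nat.zero_le _)]
      simp
    · have hy : row.getD i 0 ∉ rs.flatten := fun h => hnd.2.2 _ (getD_mem hb.1 0) _ h rfl
      obtain ⟨hins, hbump⟩ :=
        rowInsertT_cons_of_insertInRow_eq (rs := rs) (insertInRow_of_isBumpPos hb)
      rw [hins, hbump, rowUninsertT, ih hT.2.2.2 hnd.2.1 hy, unbumpRow_set hT.2.1 hb]

theorem rowInsertT_rowUninsertT (hT : IsTableau T) (hnd : T.flatten.Nodup) {r : ℕ}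
    (hcorner : (T.getD (r + 1) []).length < (T.getD r []).length) :
    rowInsertT (rowUninsertT r T).1 (rowUninsertT r T).2 = T ∧
      bumpRow (rowUninsertT r T).1 (rowUninsertT r T).2 = r := by
  induction T generalizing r with
  | nil => simp at hcorner
  | cons row rs ih =>
    cases r with
    | zero =>
      have hlast : row.getLast? = some (row.getLastD 0) := by
        rw [getLastD_eq_getLast?, getLast?_eq_some_getLast hT.1]; rfl
      have hle : ∀ z ∈ (dropLastInRow (row :: rs) 0).getD 0 [], z ≤ row.getLastD 0 := by
        rw [getD_dropLastInRow_self hcorner]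
        exact fun z hz => (hT.2.1.lt_of_mem_dropLast hlast hz).le
      obtain ⟨hins, hbump⟩ := rowInsertT_of_forall_le hle
      exact ⟨hins.trans (addBox_dropLastInRow hT hcorner hlast), hbump⟩
    | succ r =>
      have hr : r < rs.length := lt_length_of_getD_ne_nil fun h => by
        rw [getD_cons_succ, getD_cons_succ, h] at hcorner; simp at hcorner
      obtain ⟨i, hi, heq, hlow, -⟩ := exists_rowUninsertT_succ_cons hT hnd hr
      rw [flatten_cons, nodup_append] at hnd
      obtain ⟨hins, hbump⟩ := ih hT.2.2.2 hnd.2.1 (by simpa using hcorner)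
      obtain ⟨hins', hbump'⟩ := rowInsertT_cons_of_insertInRow_eq (rs := (rowUninsertT r rs).1)
        (insertInRow_set_getD hT.2.1 hi (hlow i le_rfl))
      rw [heq, hins', hbump', hins, hbump]
      exact ⟨rfl, rfl⟩


theorem IsTableau.rowUninsertT (hT : IsTableau T) (hnd : T.flatten.Nodup) {r : ℕ}
    (hcorner : (T.getD (r + 1) []).length < (T.getD r []).length) :
    IsTableau (rowUninsertT r T).1 := by
  induction T generalizing r with
  | nil => simp at hcorner
  | cons row rs ih =>
    cases r with
    | zero => exact hT.dropLastInRow hcorner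
    | succ r =>
      have hr : r < rs.length := lt_length_of_getD_ne_nil fun h => by
        rw [getD_cons_succ, getD_cons_succ, h] at hcorner; simp at hcorner
      obtain ⟨i, hi, heq, hlow, hhigh⟩ := exists_rowUninsertT_succ_cons hT hnd hr
      rw [flatten_cons, nodup_append] at hnd
      have hcorner' : (rs.getD (r + 1) []).length < (rs.getD r []).length := by simpa using hcorner
      have hrs' := ih hT.2.2.2 hnd.2.1 hcorner'
      have hins := (rowInsertT_rowUninsertT hT.2.2.2 hnd.2.1 hcorner').1
      have hcol := hT.2.2.1
      rw [← hins, getD_zero_rowInsertT] at hcol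
      rw [heq]
      exact ⟨ne_nil_of_length_pos (by simpa using (Nat.zero_le i).trans_lt hi),
        hT.2.1.set 0 (fun j hj => hlow j hj.le) hhigh,
        hcol.set_of_insertInRow (hrs'.sortedLT_getD 0) hlow hhigh, hrs'⟩

theorem flatten_perm_rowUninsertT (hT : IsTableau T) (hnd : T.flatten.Nodup) {r : ℕ}
    (hcorner : (T.getD (r + 1) []).length < (T.getD r []).length) :
    T.flatten.Perm ((rowUninsertT r T).2 :: (rowUninsertT r T).1.flatten) := by
  conv_lhs => rw [← (rowInsertT_rowUninsertT hT hnd hcorner).1]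
  exact flatten_rowInsertT_perm _ _

end rowUninsertT

/-! ### RSK steps -/

structure IsRSKState (k : ℕ) (S : List ℕ) (PQ : List (List ℕ) × List (List ℕ)) : Prop where
  isTableau_fst : IsTableau PQ.1
  isTableau_snd : IsTableau PQ.2
  perm_fst : PQ.1.flatten.Perm S
  perm_snd : PQ.2.flatten.Perm (range' 1 k)
  shapeT_eq : shapeT PQ.1 = shapeT PQ.2

def rskUnstep (k : ℕ) (PQ : List (List ℕ) × List (List ℕ)) :
    (List (List ℕ) × List (List ℕ)) × ℕ :=
  let r := PQ.2.findIdx (fun row => decide (k ∈ row))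
  (((rowUninsertT r PQ.1).1, dropLastInRow PQ.2 r), (rowUninsertT r PQ.1).2)

namespace IsRSKState

variable {k : ℕ} {S : List ℕ} {PQ : List (List ℕ) × List (List ℕ)}

theorem of_perm (h : IsRSKState k S PQ) {S' : List ℕ} (hS : S.Perm S') : IsRSKState k S' PQ :=
  ⟨h.isTableau_fst, h.isTableau_snd, h.perm_fst.trans hS, h.perm_snd, h.shapeT_eq⟩

theorem length_eq (h : IsRSKState k S PQ) : S.length = k := by
  rw [← h.perm_fst.length_eq, length_flatten, ← length_range' (s := 1) (n := k),
    ← h.perm_snd.length_eq, length_flatten]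
  exact congrArg sum h.shapeT_eq

theorem rskStep (h : IsRSKState k S PQ) (hS : S.Nodup) {x : ℕ} (hx : x ∉ S) :
    IsRSKState (k + 1) (x :: S) (rskStep PQ (x, k + 1)) ∧
      rskUnstep (k + 1) (rskStep PQ (x, k + 1)) = (PQ, x) := by
  obtain ⟨hP, hQ, hpermP, hpermQ, hshape⟩ := h
  have hndP : PQ.1.flatten.Nodup := hpermP.nodup_iff.2 hS
  have hxP : x ∉ PQ.1.flatten := fun h => hx (hpermP.mem_iff.1 h)
  have hlt : ∀ a ∈ PQ.2.flatten, a < k + 1 := fun a ha => by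
    have := hpermQ.mem_iff.1 ha; rw [mem_range'_1] at this; omega
  set b := bumpRow PQ.1 x
  have hb : b ≤ PQ.2.length := by
    have := congrArg List.length hshape
    simp only [shapeT, length_map] at this
    exact (bumpRow_le_length _ _).trans_eq this
  have hlenP := length_getD_rowInsertT PQ.1 x
  have hlenQ := length_getD_addBox (c := k + 1) hb
  have hP' := hP.rowInsertT hndP hxP
  have hQ' : IsTableau (addBox PQ.2 b (k + 1)) := by
    refine hQ.addBox hb (fun i hi => ?_) fun i _ a ha => hlt a (mem_flatten_of_mem_getD ha)
    have := hP'.length_getD_le_of_le hi.le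
    rw [hlenP, hlenP, if_pos rfl, if_neg hi.ne] at this
    rw [← length_getD_eq_of_shapeT_eq hshape, ← length_getD_eq_of_shapeT_eq hshape]
    omega
  rw [rskStep_eq, newBoxRow_eq_bumpRow]
  refine ⟨⟨hP', hQ', (flatten_rowInsertT_perm _ _).trans (hpermP.cons x),
    (flatten_addBox_perm _ _ _).trans ((hpermQ.cons _).trans (range'_one_succ_perm k).symm),
    hP'.shapeT_eq hQ' fun i => by rw [hlenP, hlenQ, length_getD_eq_of_shapeT_eq hshape]⟩, ?_⟩
  show rskUnstep (k + 1) (rowInsertT PQ.1 x, addBox PQ.2 b (k + 1)) = (PQ, x)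
  simp only [rskUnstep]
  rw [findIdx_mem_addBox hb fun h => (hlt _ h).false, rowUninsertT_rowInsertT hP hndP hxP,
    dropLastInRow_addBox hQ hb]

theorem rskUnstep (h : IsRSKState (k + 1) S PQ) (hS : S.Nodup) :
    (rskUnstep (k + 1) PQ).2 ∈ S ∧
      IsRSKState k (S.erase (rskUnstep (k + 1) PQ).2) (rskUnstep (k + 1) PQ).1 ∧
      _root_.rskStep (rskUnstep (k + 1) PQ).1 ((rskUnstep (k + 1) PQ).2, k + 1) = PQ := by
  obtain ⟨hP, hQ, hpermP, hpermQ, hshape⟩ := h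
  obtain ⟨hcornerQ, hlast⟩ := hQ.max_at_corner hpermQ
  simp only [RSK.rskUnstep]
  set r := PQ.2.findIdx (fun row => decide (k + 1 ∈ row))
  have hcornerP : (PQ.1.getD (r + 1) []).length < (PQ.1.getD r []).length := by
    rwa [length_getD_eq_of_shapeT_eq hshape, length_getD_eq_of_shapeT_eq hshape]
  have hndP : PQ.1.flatten.Nodup := hpermP.nodup_iff.2 hS
  obtain ⟨hinsP, hbumpP⟩ := rowInsertT_rowUninsertT hP hndP hcornerP
  have hinsQ := addBox_dropLastInRow hQ hcornerQ hlast
  have hpermP' := flatten_perm_rowUninsertT hP hndP hcornerP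
  have hP' := hP.rowUninsertT hndP hcornerP
  have hQ' := hQ.dropLastInRow hcornerQ
  have hr : r ≤ (dropLastInRow PQ.2 r).length :=
    le_length_dropLastInRow (lt_length_of_getD_ne_nil fun h => by rw [h] at hlast; simp at hlast)
  refine ⟨hpermP.mem_iff.1 (hpermP'.mem_iff.2 mem_cons_self), ⟨hP', hQ', ?_, ?_, ?_⟩, ?_⟩
  · have := (hpermP.symm.trans hpermP').erase (rowUninsertT r PQ.1).2
    rw [erase_cons_head] at this
    exact this.symm
  · have := flatten_addBox_perm (dropLastInRow PQ.2 r) r (k + 1)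
    rw [hinsQ] at this
    exact ((this.symm.trans hpermQ).trans (range'_one_succ_perm k)).cons_inv
  · refine hP'.shapeT_eq hQ' fun i => ?_
    dsimp only
    have h₁ := length_getD_rowInsertT (rowUninsertT r PQ.1).1 (rowUninsertT r PQ.1).2 i
    have h₂ := length_getD_addBox (c := k + 1) hr i
    rw [hinsP, hbumpP] at h₁
    rw [hinsQ] at h₂
    have := length_getD_eq_of_shapeT_eq hshape i
    split_ifs at h₁ h₂ <;> omega
  · rw [rskStep_eq, newBoxRow_eq_bumpRow]
    simp only [hinsP, hbumpP, hinsQ]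

end IsRSKState

theorem rskPQ_nil : rskPQ [] = ([], []) := rfl

theorem rskPQ_append_singleton (l : List ℕ) (x : ℕ) :
    rskPQ (l ++ [x]) = rskStep (rskPQ l) (x, l.length + 1) := by
  rw [rskPQ, rskPQ, length_append, length_singleton, range'_1_concat,
    zip_append (by rw [length_range']), foldl_append]
  simp [Nat.add_comm 1 l.length]

theorem isRSKState_rskPQ {l : List ℕ} (hl : l.Nodup) : IsRSKState l.length l (rskPQ l) := by
  induction l using reverseRecOn with
  | nil => exact ⟨trivial, trivial, by simp [rskPQ_nil], by simp [rskPQ_nil], rfl⟩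
  | append_singleton l x ih =>
    rw [nodup_append] at hl
    have hx : x ∉ l := fun h => hl.2.2 x h x (mem_singleton_self x) rfl
    rw [rskPQ_append_singleton, length_append, length_singleton]
    exact ((ih hl.1).rskStep hl.1 hx).1.of_perm (perm_append_singleton x l).symm

theorem rskPQ_inj_of_nodup {l₁ l₂ : List ℕ} (h₁ : l₁.Nodup) (h₂ : l₂.Nodup)
    (hlen : l₁.length = l₂.length) (h : rskPQ l₁ = rskPQ l₂) : l₁ = l₂ := by
  induction l₁ using reverseRecOn generalizing l₂ with
  | nil => exact (length_eq_zero_iff.1 hlen.symm).symm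
  | append_singleton l₁ a ih =>
    obtain rfl | ⟨l₂, b, rfl⟩ := eq_nil_or_concat l₂
    · simp at hlen
    rw [concat_eq_append] at *
    rw [nodup_append] at h₁ h₂
    have ha : a ∉ l₁ := fun h => h₁.2.2 a h a (mem_singleton_self a) rfl
    have hb : b ∉ l₂ := fun h => h₂.2.2 b h b (mem_singleton_self b) rfl
    have hlen' : l₁.length = l₂.length := by simpa using hlen
    rw [rskPQ_append_singleton, rskPQ_append_singleton, hlen'] at h
    have hu := congrArg (rskUnstep (l₂.length + 1)) h
    rw [← hlen', ((isRSKState_rskPQ h₁.1).rskStep h₁.1 ha).2, hlen',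
      ((isRSKState_rskPQ h₂.1).rskStep h₂.1 hb).2, Prod.mk.injEq] at hu
    rw [ih h₁.1 h₂.1 hlen' hu.1, hu.2]

theorem exists_rskPQ_eq {k : ℕ} {S : List ℕ} {PQ : List (List ℕ) × List (List ℕ)}
    (hS : S.Nodup) (h : IsRSKState k S PQ) : ∃ l : List ℕ, l.Perm S ∧ rskPQ l = PQ := by
  induction k generalizing S PQ with
  | zero =>
    have hQ := h.isTableau_snd.eq_nil_of_flatten_eq_nil (perm_nil.1 (by simpa using h.perm_snd))
    have hP : PQ.1 = [] := by simpa [shapeT, hQ] using h.shapeT_eq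
    refine ⟨[], ?_, Prod.ext hP.symm hQ.symm⟩
    simpa [hP] using h.perm_fst
  | succ k ih =>
    obtain ⟨hx, h', hstep⟩ := h.rskUnstep hS
    obtain ⟨l, hl, hPQ⟩ := ih (hS.erase _) h'
    refine ⟨l ++ [(rskUnstep (k + 1) PQ).2], ?_, ?_⟩
    · exact (perm_append_singleton _ _).trans ((hl.cons _).trans (perm_cons_erase hx).symm)
    · rw [rskPQ_append_singleton, hPQ, hl.length_eq, h'.length_eq, hstep]

/-! ### Permutations as words -/

theorem permList_nodup {m : ℕ} (π : Equiv.Perm (Fin m)) : (permList π).Nodup :=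
  (nodup_finRange m).map fun i j h => π.injective (Fin.ext (by simpa using h))

theorem permList_perm {m : ℕ} (π : Equiv.Perm (Fin m)) : (permList π).Perm (range' 1 m) := by
  refine (perm_ext_iff_of_nodup (permList_nodup π) nodup_range').2 fun a => ?_
  simp only [permList, mem_map, mem_finRange, true_and, mem_range'_1]
  constructor
  · rintro ⟨i, rfl⟩
    omega
  · rintro ⟨ha₁, ha₂⟩
    exact ⟨π.symm ⟨a - 1, by omega⟩, by simp; omega⟩

theorem permList_injective {m : ℕ} : Function.Injective (permList (m := m)) :=
  fun π₁ π₂ h => Equiv.ext fun i => Fin.ext <| by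
    simpa [permList] using congrArg (·[i.1]?) h

theorem exists_permList_eq {m : ℕ} {l : List ℕ} (hl : l.Perm (range' 1 m)) :
    ∃ π : Equiv.Perm (Fin m), permList π = l := by
  obtain rfl : l.length = m := by simpa using hl.length_eq
  have hmem : ∀ i : Fin l.length, 1 ≤ l[i.1] ∧ l[i.1] < 1 + l.length := fun i =>
    mem_range'_1.1 (hl.mem_iff.1 (getElem_mem _))
  let f : Fin l.length → Fin l.length := fun i => ⟨l[i.1] - 1, by have := hmem i; omega⟩
  have hf : Function.Injective f := fun i j hij => Fin.ext <|
    ((hl.nodup_iff.2 nodup_range').getElem_inj_iff).1 <| by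
      have := hmem i; have := hmem j; have := Fin.val_eq_of_eq hij; simp only [f] at this; omega
  refine ⟨Equiv.ofBijective f hf.bijective_of_finite, ext_getElem (by simp [permList])
    fun i hi _ => ?_⟩
  have := hmem ⟨i, by simpa [permList] using hi⟩
  simp only [permList, getElem_map, getElem_finRange, Equiv.ofBijective_apply, Fin.val_cast, f]
    at this ⊢
  omega

end RSK

open RSK in
/-- **RSK Correspondence.** The RSK map is a bijection between permutations of
`[m]` and pairs `(P, Q)` of standard Young tableaux with entries `[m]` having
the same shape: it is injective, and its range is exactly the set of such pairs. -/
theorem rsk_bijection (m : ℕ) :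
    Function.Injective (fun π : Equiv.Perm (Fin m) => rskPQ (permList π)) ∧
    Set.range (fun π : Equiv.Perm (Fin m) => rskPQ (permList π)) =
      {PQ : List (List ℕ) × List (List ℕ) |
        isSYT m PQ.1 ∧ isSYT m PQ.2 ∧ shapeT PQ.1 = shapeT PQ.2} := by
  refine ⟨fun π₁ π₂ h => permList_injective (rskPQ_inj_of_nodup (permList_nodup π₁)
    (permList_nodup π₂) (by simp [permList]) h), Set.ext fun PQ => ⟨?_, ?_⟩⟩
  · rintro ⟨π, rfl⟩
    have h := isRSKState_rskPQ (permList_nodup π)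
    rw [show (permList π).length = m by simp [permList]] at h
    exact ⟨isSYT_iff.2 ⟨h.isTableau_fst, h.perm_fst.trans (permList_perm π)⟩,
      isSYT_iff.2 ⟨h.isTableau_snd, h.perm_snd⟩, h.shapeT_eq⟩
  · rintro ⟨hP, hQ, hshape⟩
    rw [isSYT_iff] at hP hQ
    obtain ⟨l, hl, hPQ⟩ :=
      exists_rskPQ_eq List.nodup_range' ⟨hP.1, hQ.1, hP.2, hQ.2, hshape⟩
    obtain ⟨π, rfl⟩ := exists_permList_eq hl
    exact ⟨π, hPQ⟩
end

section
/- Let σ be a permutation of [m] (viewed as a perfect matching F between two ordered sets of size m, pairing i with σ(i)). Define Φ(F) = a₁⋯a_m | b₁⋯b_m where a_i is the length of the longest planar matching of F using only pairs (i', σ(i')) with i' ≤ i and containing (i, σ(i)) as its last pair on the left side, and b_j is defined analogously on the right side. Then for any pair (i, σ(i)) of F and any k, we have a_i = k if and only if b_{σ(i)} = k. -/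
/-- `a_i`: the maximum size of a planar matching of the perfect matching given by
the permutation `σ` that uses only pairs `(i', σ i')` with `i' ≤ i` and contains
the pair `(i, σ i)`; a planar matching is a set of indices on which `σ` is
strictly increasing. -/
def aVal (m : ℕ) (σ : Equiv.Perm (Fin m)) (i : Fin m) : ℕ :=
  (Finset.univ.filter (fun s : Finset (Fin m) =>
    i ∈ s ∧ (∀ x ∈ s, x ≤ i) ∧ ∀ x ∈ s, ∀ y ∈ s, x < y → σ x < σ y)).sup
    Finset.card

/-- `b_j`: the maximum size of a planar matching of `σ` using only pairs with
right endpoint at most `j` and containing the pair `(σ⁻¹ j, j)`. -/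
def bVal (m : ℕ) (σ : Equiv.Perm (Fin m)) (j : Fin m) : ℕ :=
  aVal m σ⁻¹ j

/-- The quasi-configuration `φ(w)` of a representative walk
`w = a₁⋯a_m | b₁⋯b_m`: for each level `k`, the initial segment of
`A_k = {i : a i = k}` of size `min |A_k| |B_k|` is matched in the crossing way
with the terminal segment of `B_k = {j : b j = k}` of the same size. A left
index `i` is paired with a right index `j` iff they are on the same level, the
rank of `i` from the start of `A_k` equals the rank of `j` from the end of
`B_k`, and this common rank is less than `min |A_k| |B_k|`. -/
def phiMatch (m : ℕ) (a b : Fin m → ℕ) : Set (Fin m × Fin m) :=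
  {p : Fin m × Fin m |
    a p.1 = b p.2 ∧
    (Finset.univ.filter (fun i' : Fin m => a i' = a p.1 ∧ i' < p.1)).card =
      (Finset.univ.filter (fun j' : Fin m => b j' = b p.2 ∧ p.2 < j')).card ∧
    (Finset.univ.filter (fun i' : Fin m => a i' = a p.1 ∧ i' < p.1)).card <
      min (Finset.univ.filter (fun i' : Fin m => a i' = a p.1)).card
        (Finset.univ.filter (fun j' : Fin m => b j' = b p.2)).card}

/-! On a planar matching `s` the permutation `σ` is strictly increasing, so `σ` maps `s` onto a
planar matching of `σ⁻¹` of the same size whose largest element is `σ i` when that of `s` is `i`.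
Hence `a_i ≤ b_{σ i}`, and the same argument for `σ⁻¹` gives the reverse inequality. -/

lemma aVal_le_aVal_inv_apply (m : ℕ) (σ : Equiv.Perm (Fin m)) (i : Fin m) :
    aVal m σ i ≤ aVal m σ⁻¹ (σ i) := by
  refine Finset.sup_le fun s hs => ?_
  simp only [Finset.mem_filter, Finset.mem_univ, true_and] at hs
  obtain ⟨hi, hle, hmono⟩ := hs
  have hσ : StrictMonoOn σ (s : Set (Fin m)) := fun x hx y hy => hmono x hx y hy
  rw [← Finset.card_image_of_injective s σ.injective]
  refine Finset.le_sup (f := Finset.card) ?_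
  simp only [Finset.mem_filter, Finset.mem_univ, true_and, Finset.forall_mem_image,
    Equiv.Perm.coe_inv, Equiv.symm_apply_apply]
  exact ⟨Finset.mem_image_of_mem σ hi, fun x hx => (hσ.le_iff_le hx hi).2 (hle x hx),
    fun x hx y hy h => (hσ.lt_iff_lt hx hy).1 h⟩

lemma aVal_inv_apply (m : ℕ) (σ : Equiv.Perm (Fin m)) (i : Fin m) :
    aVal m σ⁻¹ (σ i) = aVal m σ i := by
  refine le_antisymm ?_ (aVal_le_aVal_inv_apply m σ i)
  simpa using aVal_le_aVal_inv_apply m σ⁻¹ (σ i)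

/-- For every pair `(i, σ i)` of the perfect matching `F` determined by `σ`, and
every `k`: `a_i = k` if and only if `b_{σ(i)} = k`, where `a, b` are the
longest-planar-matching profiles forming the walk `Φ(F)`. -/
theorem aVal_eq_iff_bVal_eq (m : ℕ) (σ : Equiv.Perm (Fin m)) (i : Fin m) (k : ℕ) :
    aVal m σ i = k ↔ bVal m σ (σ i) = k := by
  rw [bVal, aVal_inv_apply]
end

section
/- With Φ and φ as defined (Φ maps a perfect matching/permutation F of [m] to the walk of its longest-planar-matching profile values, and φ maps a walk back to a matching by crossing-matching the level sets A_k and B_k), one has φ(Φ(F)) = F for every perfect matching F. -/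
/-!
If `i < i'` and `σ i < σ i'`, a longest planar matching ending at `(i, σ i)` extends by the pair
`(i', σ i')`, so `a_i < a_{i'}`: on each level set `A_k` the permutation `σ` is strictly decreasing.
Reading a planar matching from the right shows `a_i = b_{σ i}`, so `σ` maps `A_k` onto `B_k`
reversing the order. Hence the `r`-th element of `A_k` from the start is sent by `σ` to the `r`-th
element of `B_k` from the end, which is exactly how `φ` pairs them.
-/

open Finset

section Rank

variable {α β : Type*} [Fintype α]

lemma card_filter_and_lt_card_filter {q p : α → Prop} [DecidablePred q] [DecidablePred p]
    {x : α} (hq : q x) (hp : ¬p x) : #{z | q z ∧ p z} < #{z | q z} := by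
  rw [← filter_filter]
  exact card_lt_card (filter_ssubset.2 ⟨x, by simpa using hq, hp⟩)

variable [LinearOrder α] [DecidableEq β]

lemma card_filter_gt_lt_of_lt (f : α → β) {x y : α} (hxy : f x = f y) (h : x < y) :
    #{z | f z = f y ∧ y < z} < #{z | f z = f x ∧ x < z} := by
  refine card_lt_card <| (ssubset_iff_of_subset fun z hz => ?_).2 ⟨y, ?_, ?_⟩
  · simp only [mem_filter, mem_univ, true_and] at hz ⊢
    exact ⟨hz.1.trans hxy.symm, h.trans hz.2⟩
  · simpa using ⟨hxy.symm, h⟩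
  · simp

lemma eq_of_card_filter_gt_eq (f : α → β) {x y : α} (hxy : f x = f y)
    (h : #{z | f z = f x ∧ x < z} = #{z | f z = f y ∧ y < z}) : x = y := by
  rcases lt_trichotomy x y with hlt | heq | hgt
  · exact absurd h (card_filter_gt_lt_of_lt f hxy hlt).ne'
  · exact heq
  · exact absurd h (card_filter_gt_lt_of_lt f hxy.symm hgt).ne

end Rank

section Profile

variable {m : ℕ} (σ : Equiv.Perm (Fin m))

lemma card_le_aVal {s : Finset (Fin m)} {i : Fin m} (hi : i ∈ s) (hle : ∀ x ∈ s, x ≤ i)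
    (hmono : StrictMonoOn σ s) : #s ≤ aVal m σ i :=
  le_sup (mem_filter.2 ⟨mem_univ _, hi, hle, fun _ hx _ hy => hmono hx hy⟩)

lemma exists_card_eq_aVal (i : Fin m) :
    ∃ s : Finset (Fin m), i ∈ s ∧ (∀ x ∈ s, x ≤ i) ∧ StrictMonoOn σ s ∧ #s = aVal m σ i := by
  obtain ⟨s, hs, hcard⟩ := exists_mem_eq_sup (univ.filter fun s : Finset (Fin m) =>
    i ∈ s ∧ (∀ x ∈ s, x ≤ i) ∧ ∀ x ∈ s, ∀ y ∈ s, x < y → σ x < σ y) ⟨{i}, by simp⟩ card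
  obtain ⟨-, hi, hle, hmono⟩ := mem_filter.1 hs
  exact ⟨s, hi, hle, fun _ hx _ hy => hmono _ hx _ hy, hcard.symm⟩

lemma aVal_le_aVal_inv (i : Fin m) : aVal m σ i ≤ aVal m σ⁻¹ (σ i) := by
  obtain ⟨s, hi, hle, hmono, hcard⟩ := exists_card_eq_aVal σ i
  rw [← hcard, ← card_image_of_injective s σ.injective]
  refine card_le_aVal σ⁻¹ (mem_image_of_mem σ hi) ?_ ?_
  · simp only [mem_image, forall_exists_index, and_imp, forall_apply_eq_imp_iff₂]
    exact fun x hx => hmono.monotoneOn hx hi (hle x hx)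
  · rw [coe_image]
    rintro _ ⟨x, hx, rfl⟩ _ ⟨y, hy, rfl⟩ hxy
    simpa using (hmono.lt_iff_lt hx hy).1 hxy

lemma bVal_apply (i : Fin m) : bVal m σ (σ i) = aVal m σ i :=
  le_antisymm (by simpa [bVal] using aVal_le_aVal_inv σ⁻¹ (σ i)) (aVal_le_aVal_inv σ i)

lemma aVal_lt_aVal {i i' : Fin m} (h : i < i') (hσ : σ i < σ i') : aVal m σ i < aVal m σ i' := by
  obtain ⟨s, hi, hle, hmono, hcard⟩ := exists_card_eq_aVal σ i
  have hle' : ∀ x ∈ s, x ≤ i' := fun x hx => (hle x hx).trans h.le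
  have hmono' : StrictMonoOn σ ↑(insert i' s) := by
    rw [coe_insert, strictMonoOn_insert_iff_of_forall_le hle']
    exact ⟨fun x hx _ => (hmono.monotoneOn hx hi (hle x hx)).trans_lt hσ, hmono⟩
  have hi' : i' ∉ s := fun hi' => (hle i' hi').not_gt h
  calc aVal m σ i = #s := hcard.symm
    _ < #(insert i' s) := by rw [card_insert_of_notMem hi']; omega
    _ ≤ aVal m σ i' :=
      card_le_aVal σ (mem_insert_self _ _) ((forall_mem_insert _ _ _).2 ⟨le_rfl, hle'⟩) hmono'

lemma strictAntiOn_setOf_aVal_eq (k : ℕ) : StrictAntiOn σ {i | aVal m σ i = k} :=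
  fun _ hi _ hi' h => (σ.injective.ne h.ne).lt_or_gt.resolve_left
    fun hσ => (aVal_lt_aVal σ h hσ).ne (hi.trans hi'.symm)

lemma card_aVal_level_lt_eq_card_bVal_level_gt (i : Fin m) :
    #{i' | aVal m σ i' = aVal m σ i ∧ i' < i} =
      #{j' | bVal m σ j' = bVal m σ (σ i) ∧ σ i < j'} :=
  card_equiv σ fun i' => by
    simp only [mem_filter, mem_univ, true_and, bVal_apply]
    exact and_congr_right fun hlev =>
      ((strictAntiOn_setOf_aVal_eq σ _).lt_iff_gt (Set.mem_ofPred.2 rfl) hlev).symm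

end Profile

/-- `φ(Φ(F)) = F`: applying the crossing-matching construction `φ` to the walk
`Φ(F) = a₁⋯a_m | b₁⋯b_m` of longest-planar-matching profile values of a perfect
matching `F` (given by the permutation `σ`) recovers exactly the pairs of `F`. -/
theorem phi_Phi_eq_self (m : ℕ) (σ : Equiv.Perm (Fin m)) :
    phiMatch m (aVal m σ) (bVal m σ) = {p : Fin m × Fin m | σ p.1 = p.2} := by
  ext ⟨i, j⟩
  simp only [phiMatch, Set.mem_ofPred_eq]
  constructor
  · rintro ⟨hlev, hrank, -⟩
    exact eq_of_card_filter_gt_eq (bVal m σ) ((bVal_apply σ i).trans hlev)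
      ((card_aVal_level_lt_eq_card_bVal_level_gt σ i).symm.trans hrank)
  · rintro rfl
    refine ⟨(bVal_apply σ i).symm, card_aVal_level_lt_eq_card_bVal_level_gt σ i, lt_min ?_ ?_⟩
    · exact card_filter_and_lt_card_filter rfl (lt_irrefl i)
    · rw [card_aVal_level_lt_eq_card_bVal_level_gt σ i]
      exact card_filter_and_lt_card_filter rfl (lt_irrefl _)
end

section
/- Let w and w' be two closed walks of the form a₁⋯a_m | b₁⋯b_m and a'₁⋯a'_m | b'₁⋯b'_m in ℤ^d from the origin to the origin, and suppose φ(w) = φ(w') as perfect matchings and the positive steps agree: a_i = a'_i for all i. Then b_j = b'_j for all j, so w = w'. -/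
/-!
Closedness makes `φ(w)` cover every right index `j`: the rank of `j` from the end of
`B_{b j}` is less than `|B_{b j}| = |A_{b j}|`, so the element `i` of `A_{b j}` with that rank
from the start is paired with `j`. Matched pairs lie on one level, so `b' j = a' i = a i = b j`.
-/

open Finset

lemma Finset.exists_card_filter_lt_eq {α : Type*} [LinearOrder α] (s : Finset α) {r : ℕ}
    (hr : r < #s) : ∃ x ∈ s, #(s.filter (· < x)) = r := by
  have hmono : StrictMonoOn (fun x => #(s.filter (· < x))) s := fun x hx y _ hxy =>
    card_lt_card <| (ssubset_iff_of_subset (monotone_filter_right s fun _ _ hz => hz.trans hxy)).2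
      ⟨x, mem_filter.2 ⟨hx, hxy⟩, by simp⟩
  have hmaps : Set.MapsTo (fun x => #(s.filter (· < x))) s (range #s) := fun x hx =>
    mem_range.2 <| card_lt_card <| filter_ssubset.2 ⟨x, hx, lt_irrefl x⟩
  exact surjOn_of_injOn_of_card_le _ hmaps hmono.injOn (by simp) (mem_range.2 hr)

lemma exists_mem_phiMatch {m : ℕ} {a b : Fin m → ℕ} (j : Fin m)
    (hclosed : #{i | a i = b j} = #{j' | b j' = b j}) : ∃ i, (i, j) ∈ phiMatch m a b := by
  set A : Finset (Fin m) := {i | a i = b j}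
  set B : Finset (Fin m) := {j' | b j' = b j}
  have hrankB : #{j' | b j' = b j ∧ j < j'} = #(B.filter (j < ·)) := by rw [filter_filter]
  have hr : #(B.filter (j < ·)) < #A :=
    hclosed ▸ card_lt_card (filter_ssubset.2 ⟨j, by simp [B], lt_irrefl j⟩)
  obtain ⟨i, hiA, hi⟩ := A.exists_card_filter_lt_eq hr
  have hai : a i = b j := (mem_filter.1 hiA).2
  have hrankA : #{i' | a i' = a i ∧ i' < i} = #(A.filter (· < i)) := by rw [filter_filter, hai]
  refine ⟨i, hai, ?_, ?_⟩
  · rw [hrankA, hi, hrankB]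
  · rw [hrankA, hi, hai, ← hclosed, min_self]
    exact hr

theorem eq_of_phiMatch_eq_of_pos_eq_general (m : ℕ) (a a' b b' : Fin m → ℕ)
    (hclosed : ∀ k : ℕ,
      (Finset.univ.filter (fun i : Fin m => a i = k)).card =
      (Finset.univ.filter (fun j : Fin m => b j = k)).card)
    (hphi : phiMatch m a b = phiMatch m a' b') (hpos : a = a') :
    b = b' := by
  funext j
  obtain ⟨i, hij⟩ := exists_mem_phiMatch j (hclosed (b j))
  have hij' : (i, j) ∈ phiMatch m a' b' := hphi ▸ hij
  calc b j = a i := hij.1.symm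
    _ = a' i := by rw [hpos]
    _ = b' j := hij'.1

/-- If two closed walks `w = a₁⋯a_m | b₁⋯b_m` and `w' = a'₁⋯a'_m | b'₁⋯b'_m`
from the origin to the origin have `φ(w) = φ(w')` as perfect matchings and
agree on their positive steps, then they also agree on their negative steps,
so `w = w'`. -/
theorem eq_of_phiMatch_eq_of_pos_eq (m d : ℕ) (a a' b b' : Fin m → ℕ)
    (ha : ∀ i, a i < d) (ha' : ∀ i, a' i < d)
    (hb : ∀ j, b j < d) (hb' : ∀ j, b' j < d)
    (hclosed : ∀ k : ℕ,
      (Finset.univ.filter (fun i : Fin m => a i = k)).card =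
      (Finset.univ.filter (fun j : Fin m => b j = k)).card)
    (hclosed' : ∀ k : ℕ,
      (Finset.univ.filter (fun i : Fin m => a' i = k)).card =
      (Finset.univ.filter (fun j : Fin m => b' j = k)).card)
    (hphi : phiMatch m a b = phiMatch m a' b') (hpos : a = a') :
    b = b' :=
  eq_of_phiMatch_eq_of_pos_eq_general m a a' b b' hclosed hphi hpos
end

section
/- For the simplified reflection involution ρ on walks from (d−1, ..., 0) not staying in R = {x₁ > ... > x_d}: ρ ∘ ρ is the identity on its domain, and ρ(w) also does not stay in R. -/
open scoped Classical

/-- The point of the walk after `t` steps: the walk starts at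
`(d−1, d−2, …, 0)` and each step `c_i ∈ Fin d` is the positive unit step
`+e_{c_i}`; coordinate `j` after `t` steps is `d − 1 − j` plus the number of
steps among the first `t` in direction `j`. -/
def walkPt (d : ℕ) (c : List (Fin d)) (t : ℕ) (j : Fin d) : ℤ :=
  ((d : ℤ) - 1 - (j : ℤ)) + ((c.take t).count j : ℤ)

/-- The open region `R = {x : x₁ > x₂ > … > x_d}` of strictly decreasing
coordinates. -/
def inR (d : ℕ) (x : Fin d → ℤ) : Prop :=
  ∀ j k : Fin d, j < k → x k < x j

/-- The walk `c` does not stay in `R`. -/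
def leavesR (d : ℕ) (c : List (Fin d)) : Prop :=
  ∃ t, t ≤ c.length ∧ ¬ inR d (walkPt d c t)

/-- The reflection involution `ρ`: if the walk leaves `R`, let `t` be the first
exit time and `j` the (unique) index with `p_j = p_{j+1}` at time `t`; keep the
first `t` steps and swap directions `j` and `j+1` in the remaining steps.
Otherwise leave the walk unchanged. -/
noncomputable def rho (d : ℕ) (c : List (Fin d)) : List (Fin d) :=
  if h : ∃ t, t ≤ c.length ∧ ¬ inR d (walkPt d c t) then
    let t := Nat.find h
    if hj : ∃ j : ℕ, ∃ h1 : j + 1 < d,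
        walkPt d c t ⟨j, by omega⟩ = walkPt d c t ⟨j + 1, h1⟩ then
      let j := Nat.find hj
      have h1 : j + 1 < d := (Nat.find_spec hj).choose
      c.take t ++ (c.drop t).map (fun x : Fin d =>
        if (x : ℕ) = j then (⟨j + 1, h1⟩ : Fin d)
        else if (x : ℕ) = j + 1 then (⟨j, by omega⟩ : Fin d) else x)
    else c
  else c

private lemma rho_aux (d : ℕ) (c : List (Fin d)) (t j : ℕ) (h1 : j + 1 < d)
    (f : Fin d → Fin d)
    (hf : f = fun x : Fin d =>
      if (x : ℕ) = j then (⟨j + 1, h1⟩ : Fin d)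
      else if (x : ℕ) = j + 1 then (⟨j, by omega⟩ : Fin d) else x)
    (ht1 : t ≤ c.length) (ht2 : ¬ inR d (walkPt d c t))
    (htmin : ∀ m, m < t → ¬(m ≤ c.length ∧ ¬ inR d (walkPt d c m)))
    (hjspec : walkPt d c t ⟨j, by omega⟩ = walkPt d c t ⟨j + 1, h1⟩)
    (hjmin : ∀ m, m < j → ¬ ∃ hm : m + 1 < d,
      walkPt d c t ⟨m, by omega⟩ = walkPt d c t ⟨m + 1, hm⟩) :
    rho d (c.take t ++ (c.drop t).map f) = c ∧
      leavesR d (c.take t ++ (c.drop t).map f) := by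
  obtain ⟨c2, hc2def⟩ : ∃ c2, c2 = c.take t ++ (c.drop t).map f := ⟨_, rfl⟩
  rw [← hc2def]
  have hff : ∀ x : Fin d, f (f x) = x := by
    intro x
    by_cases hx : (x : ℕ) = j
    · have e1 : f x = ⟨j + 1, h1⟩ := by rw [hf]; simp [hx]
      rw [e1]
      simp only [hf]
      rw [if_neg (by simp), if_pos (by simp)]
      exact Fin.ext (by simpa using hx.symm)
    · by_cases hx2 : (x : ℕ) = j + 1
      · have e1 : f x = ⟨j, by omega⟩ := by rw [hf]; simp [hx, hx2]
        rw [e1]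
        simp only [hf]
        rw [if_pos (by simp)]
        exact Fin.ext (by simpa using hx2.symm)
      · have e1 : f x = x := by rw [hf]; simp [hx, hx2]
        rw [e1, e1]
  have hlen : c2.length = c.length := by
    rw [hc2def]
    simp only [List.length_append, List.length_take, List.length_map,
      List.length_drop]
    omega
  have htake : ∀ s, s ≤ t → c2.take s = c.take s := by
    intro s hs
    rw [hc2def, List.take_append_of_le_length (by simp; omega), List.take_take,
      Nat.min_eq_left hs]
  have hw : ∀ s, s ≤ t → walkPt d c2 s = walkPt d c s := by
    intro s hs
    funext k
    unfold walkPt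
    rw [htake s hs]
  have hleaves : leavesR d c2 :=
    ⟨t, by rw [hlen]; exact ht1, by rw [hw t le_rfl]; exact ht2⟩
  refine ⟨?_, hleaves⟩
  have hcc2 : ∃ s, s ≤ c2.length ∧ ¬ inR d (walkPt d c2 s) := hleaves
  have hfind2 : Nat.find hcc2 = t := by
    rw [Nat.find_eq_iff]
    refine ⟨⟨by rw [hlen]; exact ht1, by rw [hw t le_rfl]; exact ht2⟩, ?_⟩
    intro m hm
    have h2 := htmin m hm
    rw [hlen, hw m (le_of_lt hm)]
    exact h2
  have hwt := hw t le_rfl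
  have hj2 : ∃ j' : ℕ, ∃ h1' : j' + 1 < d,
      walkPt d c2 (Nat.find hcc2) ⟨j', by omega⟩ =
        walkPt d c2 (Nat.find hcc2) ⟨j' + 1, h1'⟩ := by
    rw [hfind2, hwt]
    exact ⟨j, h1, hjspec⟩
  have hfindj2 : Nat.find hj2 = j := by
    rw [Nat.find_eq_iff]
    constructor
    · rw [hfind2, hwt]
      exact ⟨h1, hjspec⟩
    · intro m hm
      rw [hfind2, hwt]
      exact hjmin m hm
  have key : ∀ (t' j' : ℕ) (h1' : j' + 1 < d), t' = t → j' = j →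
      c2.take t' ++ (c2.drop t').map (fun x : Fin d =>
        if (x : ℕ) = j' then (⟨j' + 1, h1'⟩ : Fin d)
        else if (x : ℕ) = j' + 1 then (⟨j', by omega⟩ : Fin d) else x) = c := by
    intro t' j' h1' het hej
    subst het; subst hej
    have hfe : (fun x : Fin d =>
        if (x : ℕ) = j' then (⟨j' + 1, h1'⟩ : Fin d)
        else if (x : ℕ) = j' + 1 then (⟨j', by omega⟩ : Fin d) else x) = f := by
      rw [hf]
    rw [hfe]
    have hdrop : c2.drop t' = (c.drop t').map f := by
      rw [hc2def]
      have hl : (c.take t').length = t' := by simp; omega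
      rw [List.drop_left' hl]
    rw [htake t' le_rfl, hdrop, List.map_map]
    have hid : f ∘ f = id := funext hff
    rw [hid, List.map_id, List.take_append_drop]
  simp only [rho, dif_pos hcc2, dif_pos hj2]
  exact key (Nat.find hcc2) (Nat.find hj2) (Nat.find_spec hj2).choose hfind2 hfindj2

/-- For the reflection map `ρ` on walks from `(d−1, …, 0)` not staying in
`R = {x₁ > … > x_d}`: `ρ ∘ ρ` is the identity on its domain, and `ρ(w)` again
does not stay in `R`. -/
theorem rho_involutive_and_leavesR (d : ℕ) (c : List (Fin d))
    (hc : leavesR d c) :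
    rho d (rho d c) = c ∧ leavesR d (rho d c) := by
  have hc' : ∃ t, t ≤ c.length ∧ ¬ inR d (walkPt d c t) := hc
  by_cases hj : ∃ j : ℕ, ∃ h1 : j + 1 < d,
      walkPt d c (Nat.find hc') ⟨j, by omega⟩ = walkPt d c (Nat.find hc') ⟨j + 1, h1⟩
  case pos =>
    have h1 : Nat.find hj + 1 < d := (Nat.find_spec hj).choose
    have hrc : rho d c = c.take (Nat.find hc') ++ (c.drop (Nat.find hc')).map
        (fun x : Fin d =>
          if (x : ℕ) = Nat.find hj then (⟨Nat.find hj + 1, h1⟩ : Fin d)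
          else if (x : ℕ) = Nat.find hj + 1 then
            (⟨Nat.find hj, by omega⟩ : Fin d) else x) := by
      simp only [rho, dif_pos hc', dif_pos hj]
    rw [hrc]
    exact rho_aux d c (Nat.find hc') (Nat.find hj) h1 _ rfl
      (Nat.find_spec hc').1 (Nat.find_spec hc').2
      (fun m hm => Nat.find_min hc' hm) (Nat.find_spec hj).choose_spec
      (fun m hm => Nat.find_min hj hm)
  case neg =>
    have hrc : rho d c = c := by
      simp only [rho, dif_pos hc', dif_neg hj]
    rw [hrc]
    exact ⟨hrc, hc⟩
end
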